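/- arXiv:1712.01723 — 8 statements merged into one kernel-verified Lean document; each statement's English description precedes it below -/
import Mathlib

section
/- If η : L → L' is a surjective lattice homomorphism between finite lattices and a is an atom of L' , then there exists an atom x of L with η(x) ≤ a; moreover for every atom s of L, η(s) is either the bottom element of L' or an atom of L'. -/
/-- If `η : L → L'` is a surjective lattice homomorphism between finite lattices and `a`
is an atom of `L'`, then there is an atom `x` of `L` with `η x ≤ a`; moreover for every
atom `s` of `L`, `η s` is either the bottom element of `L'` or an atom of `L'`. -/
theorem stmt_1 {L L' : Type*} [Lattice L] [Fintype L] [BoundedOrder L]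
    [Lattice L'] [Fintype L'] [BoundedOrder L'] (η : L → L')
    (hinf : ∀ x y : L, η (x ⊓ y) = η x ⊓ η y)
    (hsup : ∀ x y : L, η (x ⊔ y) = η x ⊔ η y)
    (hsurj : Function.Surjective η) :
    (∀ a : L', IsAtom a → ∃ x : L, IsAtom x ∧ η x ≤ a) ∧
    (∀ s : L, IsAtom s → η s = (⊥ : L') ∨ IsAtom (η s)) := by
  have hmono : Monotone η := by
    intro x y hxy
    have : x ⊓ y = x := inf_eq_left.mpr hxy
    calc η x = η (x ⊓ y) := by rw [this]
    _ = η x ⊓ η y := hinf x y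
    _ ≤ η y := inf_le_right
  have hbot : η ⊥ = ⊥ := by
    obtain ⟨z, hz⟩ := hsurj ⊥
    exact le_antisymm (hz ▸ hmono bot_le) bot_le
  constructor
  · intro a ha
    obtain ⟨y, hy⟩ := hsurj a
    have hy' : y ≠ ⊥ := by
      intro h; rw [h, hbot] at hy; exact ha.1 hy.symm
    obtain ⟨x, hx, hxy⟩ := (eq_bot_or_exists_atom_le y).resolve_left hy'
    exact ⟨x, hx, hy ▸ hmono hxy⟩
  · intro s hs
    by_cases h : η s = ⊥
    · exact Or.inl h
    · right
      refine ⟨h, fun b hb => ?_⟩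
      obtain ⟨y, hy⟩ := hsurj b
      have : η (y ⊓ s) = b := by rw [hinf, hy, inf_eq_left.mpr hb.le]
      rcases hs.le_iff.mp (inf_le_right : y ⊓ s ≤ s) with h1 | h1
      · rw [h1, hbot] at this; exact this.symm
      · rw [h1] at this; exact absurd this.symm hb.ne
end

section
/- Simion's map η_σ from signed permutations of {±1,…,±n} to permutations of {1,…,n+1} is surjective: every permutation of {1,…,n+1} arises as the image of some signed permutation. -/
/-- `f` is the one-line notation of a signed permutation of `{±1, …, ±n}`:
the absolute values of the entries are distinct and lie in `{1, …, n}`. -/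
def IsSignedPerm (n : ℕ) (f : Fin n → ℤ) : Prop :=
  (∀ i, 1 ≤ (f i).natAbs ∧ (f i).natAbs ≤ n) ∧
    Function.Injective fun i => (f i).natAbs

/-- Simion's map: form the sequence `(−πₙ)⋯(−π₁) 0 π₁⋯πₙ`, extract the subsequence of
nonnegative entries, and add `1` to each entry. -/
def etaSigma (n : ℕ) (f : Fin n → ℤ) : List ℤ :=
  ((((List.ofFn f).map fun x => -x).reverse ++ 0 :: List.ofFn f).filter
    fun x => decide (0 ≤ x)).map fun x => x + 1

/-!
Write the one-line word of `τ`, shifted down by one, as `a 0 b`, and take `π = (−a)ʳᵉᵛ b`.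
In `(−π)ʳᵉᵛ 0 π = (−b)ʳᵉᵛ a 0 (−a)ʳᵉᵛ b` the nonnegative entries are `a 0 b`, while the
absolute values of `π` are `aʳᵉᵛ b`, which lists `1, …, n` once each.
-/

theorem List.exists_ofFn_eq {α : Type*} {n : ℕ} {l : List α} (h : l.length = n) :
    ∃ f : Fin n → α, List.ofFn f = l := by
  subst h
  exact ⟨l.get, List.ofFn_get l⟩

theorem isSignedPerm_of_natAbs {n : ℕ} {f : Fin n → ℤ}
    (hbd : ∀ m ∈ (List.ofFn f).map Int.natAbs, m ≠ 0 ∧ m ≤ n)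
    (hnd : ((List.ofFn f).map Int.natAbs).Nodup) : IsSignedPerm n f := by
  rw [List.map_ofFn] at hbd hnd
  refine ⟨fun i => ?_, List.nodup_ofFn.mp hnd⟩
  obtain ⟨hne, hle⟩ := hbd _ (List.mem_ofFn.mpr ⟨i, rfl⟩)
  exact ⟨Nat.one_le_iff_ne_zero.mpr hne, hle⟩

def signedWord (a b : List ℕ) : List ℤ :=
  (a.map fun x : ℕ => -(x : ℤ)).reverse ++ b.map fun x : ℕ => (x : ℤ)

theorem length_signedWord (a b : List ℕ) :
    (signedWord a b).length = a.length + b.length := by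
  simp [signedWord]

theorem natAbs_signedWord (a b : List ℕ) :
    (signedWord a b).map Int.natAbs = a.reverse ++ b := by
  simp [signedWord, List.map_reverse, Function.comp_def]

theorem filter_nonneg_signedWord {a b : List ℕ} (ha : 0 ∉ a) (hb : 0 ∉ b) :
    (((signedWord a b).map fun x => -x).reverse ++ 0 :: signedWord a b).filter
      (fun x => decide (0 ≤ x)) = (a ++ 0 :: b).map fun x : ℕ => (x : ℤ) := by
  have hneg : ∀ l : List ℕ, 0 ∉ l →
      (l.map fun x : ℕ => -(x : ℤ)).filter (fun x => decide (0 ≤ x)) = [] := by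
    intro l hl
    simp only [List.filter_eq_nil_iff, List.mem_map, decide_eq_true_eq]
    rintro _ ⟨x, hx, rfl⟩
    have : x ≠ 0 := fun h => hl (h ▸ hx)
    omega
  have hnonneg : ∀ l : List ℕ,
      (l.map fun x : ℕ => (x : ℤ)).filter (fun x => decide (0 ≤ x)) = l.map fun x : ℕ => (x : ℤ) :=
    fun l => List.filter_eq_self.mpr (by simp)
  simp only [signedWord, List.map_append, List.map_reverse, List.map_map, Function.comp_def,
    neg_neg, List.reverse_append, List.reverse_reverse, List.filter_append, List.filter_reverse,
    List.filter_cons, le_refl, decide_true, if_true, hnonneg, hneg a ha, hneg b hb]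
  simp

theorem exists_isSignedPerm_etaSigma_eq {n : ℕ} {w : List ℕ} (hlen : w.length = n + 1)
    (hnd : w.Nodup) (h0 : 0 ∈ w) (hw : ∀ x ∈ w, x ≤ n) :
    ∃ f : Fin n → ℤ, IsSignedPerm n f ∧ etaSigma n f = w.map fun x : ℕ => (x : ℤ) + 1 := by
  obtain ⟨a, b, rfl⟩ := List.append_of_mem h0
  obtain ⟨h0ab, hab⟩ := List.nodup_cons.mp (List.nodup_middle.mp hnd)
  rw [List.mem_append, not_or] at h0ab
  obtain ⟨ha, hb⟩ := h0ab
  obtain ⟨f, hf⟩ := List.exists_ofFn_eq (n := n) (l := signedWord a b) (by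
    simp only [List.length_append, List.length_cons] at hlen
    rw [length_signedWord]
    omega)
  refine ⟨f, isSignedPerm_of_natAbs ?_ ?_, ?_⟩
  · rw [hf, natAbs_signedWord]
    intro m hm
    rw [List.mem_append, List.mem_reverse] at hm
    refine ⟨?_, hw m ?_⟩
    · rintro rfl
      exact hm.elim ha hb
    · rcases hm with hm | hm <;> simp [hm]
  · rw [hf, natAbs_signedWord]
    exact ((List.reverse_perm a).append_right b).nodup_iff.mpr hab
  · rw [etaSigma, hf, filter_nonneg_signedWord ha hb, List.map_map]
    rfl

/-- Simion's map `η_σ` from signed permutations of `{±1,…,±n}` to permutations of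
`{1,…,n+1}` is surjective: every permutation of `{1,…,n+1}` (given by its one-line
notation) arises as the image of some signed permutation. -/
theorem stmt_7 (n : ℕ) (τ : Equiv.Perm (Fin (n + 1))) :
    ∃ f : Fin n → ℤ, IsSignedPerm n f ∧
      etaSigma n f = List.ofFn fun i => ((τ i : ℕ) : ℤ) + 1 := by
  have h := exists_isSignedPerm_etaSigma_eq (n := n) (w := List.ofFn fun i => (τ i : ℕ))
    (by simp)
    (List.nodup_ofFn.mpr (Fin.val_injective.comp τ.injective))
    (List.mem_ofFn.mpr ⟨τ.symm 0, by simp⟩)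
    (by simp only [List.mem_ofFn]; rintro _ ⟨i, rfl⟩; exact Nat.lt_succ_iff.mp (τ i).isLt)
  rwa [List.map_ofFn] at h
end

section
/- For Simion's map η_σ from signed permutations to permutations of {1,…,n+1}, two signed permutations related by a cover in weak order have the same image if and only if the cover transposes two adjacent entries of opposite signs in the one-line notation; equivalently, if π and τ agree except that two adjacent one-line entries are swapped, then η_σ(π) = η_σ(τ) iff the two swapped entries have opposite signs, and if π and τ agree except in the sign of the first entry then η_σ(π) ≠ η_σ(τ). -/
namespace List

variable {α : Type*}

theorem eq_take_append_cons_cons_drop (l : List α) {i : ℕ} (h : i + 1 < l.length) :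
    l = l.take i ++ l[i] :: l[i + 1] :: l.drop (i + 2) := by
  rw [← drop_eq_getElem_cons, ← drop_eq_getElem_cons, take_append_drop]

theorem filter_append_cons_cons_swap_eq_iff (p : α → Bool) (l₁ l₂ : List α) (a b : α) :
    (l₁ ++ a :: b :: l₂).filter p = (l₁ ++ b :: a :: l₂).filter p ↔
      (p a → p b → a = b) := by
  simp only [filter_append, filter_cons, append_cancel_left_eq]
  cases p a <;> cases p b <;> simp [eq_comm]

theorem take_ofFn_eq_of_forall_lt {n : ℕ} {f g : Fin n → α} {m : ℕ}
    (h : ∀ k : Fin n, (k : ℕ) < m → g k = f k) :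
    (ofFn g).take m = (ofFn f).take m :=
  ext_getElem (by simp) fun k hk _ => by
    simp only [getElem_take, List.getElem_ofFn]
    exact h _ (by simp at hk; exact hk.1)

theorem drop_ofFn_eq_of_forall_le {n : ℕ} {f g : Fin n → α} {m : ℕ}
    (h : ∀ k : Fin n, m ≤ (k : ℕ) → g k = f k) :
    (ofFn g).drop m = (ofFn f).drop m :=
  ext_getElem (by simp) fun k _ _ => by
    simp only [getElem_drop, List.getElem_ofFn]
    exact h _ (by simp)

theorem ofFn_eq_take_append_cons_cons_drop {n : ℕ} (f : Fin n → α) {i j : Fin n}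
    (hij : (j : ℕ) = i + 1) :
    ofFn f = (ofFn f).take i ++ f i :: f j :: (ofFn f).drop (i + 2) := by
  have hi : (i : ℕ) + 1 < n := hij ▸ j.isLt
  obtain rfl : j = ⟨i + 1, hi⟩ := Fin.ext hij
  conv_lhs => rw [eq_take_append_cons_cons_drop (ofFn f) (by simp; omega)]
  simp only [List.getElem_ofFn]

end List

theorem etaSigma_eq_map (n : ℕ) (f : Fin n → ℤ) :
    etaSigma n f = (((List.ofFn f).filter (· ≤ 0)).reverse.map (- ·) ++
      0 :: (List.ofFn f).filter (0 ≤ ·)).map (· + 1) := by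
  rw [etaSigma, List.filter_append, List.filter_cons_of_pos (by simp), List.filter_reverse,
    List.filter_map, List.map_reverse]
  congr 5
  ext x
  simp

theorem etaSigma_eq_etaSigma_iff {n : ℕ} {f g : Fin n → ℤ} (hf : 0 ∉ List.ofFn f) :
    etaSigma n f = etaSigma n g ↔
      (List.ofFn f).filter (0 ≤ ·) = (List.ofFn g).filter (0 ≤ ·) ∧
        (List.ofFn f).filter (· ≤ 0) = (List.ofFn g).filter (· ≤ 0) := by
  have h0 : ∀ l : List ℤ, 0 ∉ l → 0 ∉ (l.filter (· ≤ 0)).reverse.map (- ·) ∧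
      0 ∉ l.filter (0 ≤ ·) := fun l hl =>
    ⟨by simpa using hl, fun h => hl (List.mem_of_mem_filter h)⟩
  rw [etaSigma_eq_map, etaSigma_eq_map, (List.map_injective_iff.2 (add_left_injective 1)).eq_iff,
    List.append_cons_inj_of_notMem (h0 _ hf).1 (h0 _ hf).2,
    (List.map_injective_iff.2 neg_injective).eq_iff, List.reverse_inj]
  simp only [true_and, and_comm]

theorem IsSignedPerm.ne_zero {n : ℕ} {f : Fin n → ℤ} (hf : IsSignedPerm n f) (i : Fin n) :
    f i ≠ 0 :=
  Int.natAbs_pos.1 (hf.1 i).1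

theorem IsSignedPerm.zero_notMem_ofFn {n : ℕ} {f : Fin n → ℤ} (hf : IsSignedPerm n f) :
    0 ∉ List.ofFn f := by
  simpa [eq_comm] using hf.ne_zero

theorem IsSignedPerm.apply_ne_apply {n : ℕ} {f : Fin n → ℤ} (hf : IsSignedPerm n f) {i j : Fin n}
    (hij : i ≠ j) : f i ≠ f j :=
  fun h => hij (hf.2 (congrArg Int.natAbs h))

theorem same_sign_imp_eq_iff_mul_neg {a b : ℤ} (hab : a ≠ b) :
    ((0 ≤ a → 0 ≤ b → a = b) ∧ (a ≤ 0 → b ≤ 0 → a = b)) ↔ a * b < 0 := by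
  simp only [hab, imp_false, not_le, mul_neg_iff]
  omega

theorem sign_filters_cons_ne_neg_cons {a : ℤ} (ha : a ≠ 0) (l : List ℤ) :
    ¬ ((a :: l).filter (0 ≤ ·) = (-a :: l).filter (0 ≤ ·) ∧
      (a :: l).filter (· ≤ 0) = (-a :: l).filter (· ≤ 0)) := by
  rcases ha.lt_or_gt with h | h <;> simp [h.le, h, List.cons_ne_self]

theorem stmt_8_general (n : ℕ) (f g : Fin n → ℤ)
    (hf : IsSignedPerm n f) :
    (∀ i j : Fin n, (j : ℕ) = (i : ℕ) + 1 →
      g i = f j → g j = f i → (∀ k : Fin n, k ≠ i → k ≠ j → g k = f k) →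
      (etaSigma n f = etaSigma n g ↔ f i * f j < 0)) ∧
    (∀ h0 : 0 < n, g ⟨0, h0⟩ = -f ⟨0, h0⟩ →
      (∀ k : Fin n, k ≠ ⟨0, h0⟩ → g k = f k) →
      etaSigma n f ≠ etaSigma n g) := by
  refine ⟨fun i j hij hgi hgj hk => ?_, fun h0 hg0 hk => ?_⟩
  · obtain ⟨l₁, l₂, hf_eq, hg_eq⟩ : ∃ l₁ l₂, List.ofFn f = l₁ ++ f i :: f j :: l₂ ∧
        List.ofFn g = l₁ ++ f j :: f i :: l₂ := by
      refine ⟨_, _, List.ofFn_eq_take_append_cons_cons_drop f hij, ?_⟩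
      rw [List.ofFn_eq_take_append_cons_cons_drop g hij, hgi, hgj,
        List.take_ofFn_eq_of_forall_lt fun k hlt =>
          hk k (Fin.ne_of_val_ne (by omega)) (Fin.ne_of_val_ne (by omega)),
        List.drop_ofFn_eq_of_forall_le fun k hle =>
          hk k (Fin.ne_of_val_ne (by omega)) (Fin.ne_of_val_ne (by omega))]
    rw [etaSigma_eq_etaSigma_iff hf.zero_notMem_ofFn, hf_eq, hg_eq,
      List.filter_append_cons_cons_swap_eq_iff, List.filter_append_cons_cons_swap_eq_iff]
    simp only [decide_eq_true_eq]
    exact same_sign_imp_eq_iff_mul_neg (hf.apply_ne_apply (Fin.ne_of_val_ne (by omega)))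
  · obtain ⟨m, rfl⟩ : ∃ m, n = m + 1 := ⟨n - 1, by omega⟩
    have htail : (fun k : Fin m => g k.succ) = fun k => f k.succ :=
      funext fun k => hk _ (Fin.succ_ne_zero k)
    rw [Ne, etaSigma_eq_etaSigma_iff hf.zero_notMem_ofFn, List.ofFn_succ, List.ofFn_succ (f := g),
      htail, show g 0 = -f 0 from hg0]
    exact sign_filters_cons_ne_neg_cons (hf.ne_zero 0) _

/-- For Simion's map `η_σ`: if two signed permutations agree except that two adjacent
one-line entries are swapped, then they have the same image iff the two swapped entries
have opposite signs; and if they agree except in the sign of the first entry, then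
their images differ. -/
theorem stmt_8 (n : ℕ) (f g : Fin n → ℤ)
    (hf : IsSignedPerm n f) (hg : IsSignedPerm n g) :
    (∀ i j : Fin n, (j : ℕ) = (i : ℕ) + 1 →
      g i = f j → g j = f i → (∀ k : Fin n, k ≠ i → k ≠ j → g k = f k) →
      (etaSigma n f = etaSigma n g ↔ f i * f j < 0)) ∧
    (∀ h0 : 0 < n, g ⟨0, h0⟩ = -f ⟨0, h0⟩ →
      (∀ k : Fin n, k ≠ ⟨0, h0⟩ → g k = f k) →
      etaSigma n f ≠ etaSigma n g) :=
  stmt_8_general n f g hf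
end

section
/- The fibers of Simion's map η_σ, restricted to the elements at the bottom of their fiber, are in bijection with permutations of {1,…,n+1}: the signed permutations whose one-line notation consists of a (possibly empty) sequence of negative entries followed by a (possibly empty) sequence of positive entries map bijectively under η_σ to S_{n+1}. -/
/-- The one-line notation of `f` consists of a (possibly empty) run of negative entries
followed by a (possibly empty) run of positive entries. -/
def NegThenPos (n : ℕ) (f : Fin n → ℤ) : Prop :=
  ∃ m : ℕ, m ≤ n ∧ ∀ i : Fin n, ((i : ℕ) < m → f i < 0) ∧ (m ≤ (i : ℕ) → 0 < f i)

lemma ofFn_split (n m : ℕ) (hm : m ≤ n) (f : Fin n → ℤ) :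
    List.ofFn f = List.ofFn (fun i : Fin m => f ⟨i, by omega⟩) ++
      List.ofFn (fun i : Fin (n-m) => f ⟨m + i, by omega⟩) := by
  apply List.ext_getElem
  · simp; omega
  · intro k h1 h2
    rw [List.getElem_ofFn]
    rcases lt_or_ge k m with h | h
    · rw [List.getElem_append_left (by simpa using h), List.getElem_ofFn]
    · rw [List.getElem_append_right (by simpa using h), List.getElem_ofFn]
      congr 1
      ext
      simp
      omega

lemma etaSigma_eq (n m : ℕ) (hm : m ≤ n) (f : Fin n → ℤ)
    (h : ∀ i : Fin n, ((i : ℕ) < m → f i < 0) ∧ (m ≤ (i : ℕ) → 0 < f i)) :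
    etaSigma n f = List.ofFn (fun j : Fin m => -(f ⟨m-1-(j:ℕ), by have := j.2; omega⟩) + 1) ++
      1 :: List.ofFn (fun j : Fin (n-m) => f ⟨m + (j:ℕ), by have := j.2; omega⟩ + 1) := by
  set A := List.ofFn (fun i : Fin m => f ⟨i, by have := i.2; omega⟩) with hA
  set B := List.ofFn (fun i : Fin (n-m) => f ⟨m + i, by have := i.2; omega⟩) with hB
  have hAB : List.ofFn f = A ++ B := ofFn_split n m hm f
  have hAneg : ∀ x ∈ A, x < 0 := by
    intro x hx
    rw [hA, List.mem_ofFn] at hx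
    obtain ⟨i, rfl⟩ := hx
    exact (h _).1 (by simpa using i.2)
  have hBpos : ∀ x ∈ B, 0 < x := by
    intro x hx
    rw [hB, List.mem_ofFn] at hx
    obtain ⟨i, rfl⟩ := hx
    exact (h _).2 (by simp)
  have h1 : (B.map fun x => -x).reverse.filter (fun x => decide (0 ≤ x)) = [] := by
    rw [List.filter_eq_nil_iff]
    intro x hx
    simp only [List.mem_reverse, List.mem_map] at hx
    obtain ⟨b, hb, rfl⟩ := hx
    have := hBpos b hb
    simp; omega
  have h2 : (A.map fun x => -x).reverse.filter (fun x => decide (0 ≤ x)) =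
      (A.map fun x => -x).reverse := by
    rw [List.filter_eq_self]
    intro x hx
    simp only [List.mem_reverse, List.mem_map] at hx
    obtain ⟨a, ha, rfl⟩ := hx
    have := hAneg a ha
    simp; omega
  have h3 : A.filter (fun x => decide (0 ≤ x)) = [] := by
    rw [List.filter_eq_nil_iff]
    intro x hx
    have := hAneg x hx
    simp; omega
  have h4 : B.filter (fun x => decide (0 ≤ x)) = B := by
    rw [List.filter_eq_self]
    intro x hx
    have := hBpos x hx
    simp; omega
  rw [etaSigma, hAB, List.map_append, List.reverse_append, List.filter_append,
    List.filter_append, h1, h2, List.filter_cons, List.filter_append, h3, h4]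
  simp only [decide_eq_true_eq, le_refl, if_pos, List.nil_append, List.map_append,
    List.map_cons, List.map_reverse, List.map_map]
  have hAl : A.length = m := by rw [hA]; simp
  congr 1
  · apply List.ext_getElem
    · simp [hAl]
    · intro k hk1 hk2
      simp only [List.length_reverse, List.length_map, hAl] at hk1
      rw [List.getElem_reverse, List.getElem_map, List.getElem_ofFn]
      simp only [List.length_map, hAl]
      rw [List.getElem_ofFn]
      rfl
  · congr 1
    rw [hB, List.map_ofFn]
    rfl

section Shape
variable {α : Type*} {m r : ℕ} (a : Fin m → α) (x : α) (b : Fin r → α)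

lemma shape_length : (List.ofFn a ++ x :: List.ofFn b).length = m + 1 + r := by
  simp; omega

lemma shape_lt (k : ℕ) (hk : k < m) (hL : k < (List.ofFn a ++ x :: List.ofFn b).length) :
    (List.ofFn a ++ x :: List.ofFn b)[k] = a ⟨k, hk⟩ := by
  rw [List.getElem_append_left (by simpa using hk), List.getElem_ofFn]

lemma shape_mid (hL : m < (List.ofFn a ++ x :: List.ofFn b).length) :
    (List.ofFn a ++ x :: List.ofFn b)[m] = x := by
  rw [List.getElem_append_right (by simp)]
  simp

lemma shape_gt (j : ℕ) (hj : j < r) (hL : m + 1 + j < (List.ofFn a ++ x :: List.ofFn b).length) :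
    (List.ofFn a ++ x :: List.ofFn b)[m + 1 + j] = b ⟨j, hj⟩ := by
  rw [List.getElem_append_right (by simp; omega)]
  simp only [List.length_ofFn, show m + 1 + j - m = j + 1 from by omega]
  rw [List.getElem_cons_succ, List.getElem_ofFn]

lemma shape_elems {q : ℕ} (a : Fin m → ℤ) (b : Fin r → ℤ) (c : Fin q → ℤ)
    (h : List.ofFn a ++ (1:ℤ) :: List.ofFn b = List.ofFn c) :
    m + 1 + r = q ∧
    (∀ (k : ℕ) (hk : k < m) (hk' : k < q), a ⟨k, hk⟩ = c ⟨k, hk'⟩) ∧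
    (∀ (hmq : m < q), (1:ℤ) = c ⟨m, hmq⟩) ∧
    (∀ (j : ℕ) (hj : j < r) (hj' : m+1+j < q), b ⟨j, hj⟩ = c ⟨m+1+j, hj'⟩) := by
  have hlen : m + 1 + r = q := by
    have h2 := congrArg List.length h
    rw [shape_length] at h2
    simpa using h2
  refine ⟨hlen, ?_, ?_, ?_⟩
  · intro k hk hk'
    have e := List.getElem_of_eq h (show k < (List.ofFn a ++ (1:ℤ) :: List.ofFn b).length by
      rw [shape_length]; omega)
    rw [shape_lt _ _ _ k hk, List.getElem_ofFn] at e
    exact e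
  · intro hmq
    have e := List.getElem_of_eq h (show m < (List.ofFn a ++ (1:ℤ) :: List.ofFn b).length by
      rw [shape_length]; omega)
    rw [shape_mid, List.getElem_ofFn] at e
    exact e
  · intro j hj hj'
    have e := List.getElem_of_eq h (show m+1+j < (List.ofFn a ++ (1:ℤ) :: List.ofFn b).length by
      rw [shape_length]; omega)
    rw [shape_gt _ _ _ j hj, List.getElem_ofFn] at e
    exact e

end Shape

/-- The signed permutations whose one-line notation consists of a run of negative entries
followed by a run of positive entries map bijectively under `η_σ` onto the permutations
of `{1,…,n+1}`: each permutation has a unique such preimage. -/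
theorem stmt_9 (n : ℕ) (τ : Equiv.Perm (Fin (n + 1))) :
    ∃! f : Fin n → ℤ, IsSignedPerm n f ∧ NegThenPos n f ∧
      etaSigma n f = List.ofFn fun i => ((τ i : ℕ) : ℤ) + 1 := by
  classical
  have hmn : ((τ.symm 0 : Fin (n+1)) : ℕ) ≤ n := Nat.lt_succ_iff.mp (τ.symm 0).isLt
  set m : ℕ := ((τ.symm 0 : Fin (n+1)) : ℕ) with hmdef
  have hτm : τ ⟨m, by omega⟩ = 0 := by
    have h : (⟨m, by omega⟩ : Fin (n+1)) = τ.symm 0 := Fin.ext rfl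
    rw [h]; exact τ.apply_symm_apply 0
  have hτ0 : ∀ j : Fin (n+1), τ j = 0 → (j : ℕ) = m := by
    intro j hj
    have h : j = τ.symm 0 := by rw [← hj, Equiv.symm_apply_apply]
    rw [h]
  have hpos : ∀ j : Fin (n+1), (j:ℕ) ≠ m → 1 ≤ ((τ j : ℕ)) := by
    intro j hj
    rcases Nat.eq_zero_or_pos ((τ j : ℕ)) with h | h
    · exact absurd (hτ0 j (Fin.ext h)) hj
    · exact h
  set σ : Fin n → Fin (n+1) := fun i =>
    if h : (i:ℕ) < m then ⟨m-1-(i:ℕ), by omega⟩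
    else ⟨(i:ℕ)+1, by have := i.isLt; omega⟩ with hσ
  have hσne : ∀ i, ((σ i : ℕ)) ≠ m := by
    intro i
    simp only [hσ]
    split <;> simp <;> omega
  have hσinj : Function.Injective σ := by
    intro i j hij
    have h : ((σ i : ℕ)) = ((σ j : ℕ)) := by rw [hij]
    simp only [hσ] at h
    apply Fin.ext
    split at h <;> split at h <;> simp at h <;> omega
  set f : Fin n → ℤ := fun i =>
    if (i:ℕ) < m then -(((τ (σ i) : ℕ) : ℤ)) else ((τ (σ i) : ℕ) : ℤ) with hf
  have hval : ∀ i, (f i).natAbs = ((τ (σ i) : ℕ)) := by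
    intro i
    by_cases hi : (i:ℕ) < m
    · simp only [hf, if_pos hi, Int.natAbs_neg, Int.natAbs_natCast]
    · simp only [hf, if_neg hi, Int.natAbs_natCast]
  have hσlt : ∀ i : Fin n, (hi : (i:ℕ) < m) → σ i = ⟨m-1-(i:ℕ), by omega⟩ := by
    intro i hi
    simp only [hσ, dif_pos hi]
  have hσge : ∀ i : Fin n, ¬((i:ℕ) < m) → σ i = ⟨(i:ℕ)+1, by have := i.isLt; omega⟩ := by
    intro i hi
    simp only [hσ, dif_neg hi]
  have hsp : IsSignedPerm n f := by
    constructor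
    · intro i
      rw [hval]
      exact ⟨hpos _ (hσne i), Nat.lt_succ_iff.mp (τ (σ i)).isLt⟩
    · intro i j hij
      simp only [hval] at hij
      exact hσinj (τ.injective (Fin.ext hij))
  have hntp : ∀ i : Fin n, ((i : ℕ) < m → f i < 0) ∧ (m ≤ (i : ℕ) → 0 < f i) := by
    intro i
    constructor
    · intro hi
      have h1 := hpos _ (hσne i)
      simp only [hf, if_pos hi]
      omega
    · intro hi
      have h1 := hpos _ (hσne i)
      simp only [hf, if_neg (by omega : ¬ (i:ℕ) < m)]
      omega
  refine ⟨f, ⟨hsp, ⟨m, hmn, hntp⟩, ?_⟩, ?_⟩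
  · rw [etaSigma_eq n m hmn f hntp]
    apply List.ext_getElem
    · rw [shape_length]; simp; omega
    · intro k hk1 hk2
      simp only [List.length_ofFn] at hk2
      rw [List.getElem_ofFn]
      rcases lt_trichotomy k m with hk | hk | hk
      · rw [shape_lt _ _ _ k hk]
        set i : Fin n := ⟨m-1-k, by omega⟩ with hi
        have h1 : (i:ℕ) < m := by simp [hi]; omega
        have h2 : f i = -(((τ (σ i) : ℕ) : ℤ)) := by simp only [hf, if_pos h1]
        have h3 : σ i = ⟨k, hk2⟩ := by
          rw [hσlt i h1]
          apply Fin.ext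
          simp [hi]
          omega
        rw [h2, h3]
        ring
      · subst hk
        rw [shape_mid]
        have h4 : τ ⟨m, hk2⟩ = 0 := hτm
        rw [h4]
        simp
      · obtain ⟨j, rfl⟩ : ∃ j, k = m + 1 + j := ⟨k - m - 1, by omega⟩
        have hj : j < n - m := by omega
        rw [shape_gt _ _ _ j hj]
        set i : Fin n := ⟨m + j, by omega⟩ with hi
        have h1 : ¬ ((i:ℕ) < m) := by simp [hi]
        have h2 : f i = ((τ (σ i) : ℕ) : ℤ) := by simp only [hf, if_neg h1]
        have h3 : σ i = ⟨m + 1 + j, hk2⟩ := by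
          rw [hσge i h1]
          apply Fin.ext
          simp [hi]
          omega
        rw [h2, h3]
  · rintro g ⟨gsp, ⟨m', hm'n, hg⟩, heq⟩
    rw [etaSigma_eq n m' hm'n g hg] at heq
    obtain ⟨hlen, hlt, hmid, hgt⟩ := shape_elems _ _ _ heq
    have hm'q : m' < n + 1 := by omega
    have hmm : m' = m := by
      have h1 : (1:ℤ) = ((τ ⟨m', hm'q⟩ : Fin (n+1)) : ℕ) + 1 := hmid hm'q
      have h2 : τ ⟨m', hm'q⟩ = 0 := by
        apply Fin.ext
        rw [Fin.val_zero]
        omega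
      exact hτ0 _ h2
    subst hmm
    funext i
    by_cases hi : (i:ℕ) < m
    · have hb1 : m - 1 - (i:ℕ) < m := by omega
      have hb2 : m - 1 - (i:ℕ) < n + 1 := by omega
      have hb3 : m - 1 - (m - 1 - (i:ℕ)) < n := by have := i.isLt; omega
      have h1 : -(g ⟨m-1-(m-1-(i:ℕ)), hb3⟩) + 1
          = ((τ ⟨m-1-(i:ℕ), hb2⟩ : Fin (n+1)) : ℕ) + 1 := hlt _ hb1 hb2
      have h2 : (⟨m-1-(m-1-(i:ℕ)), hb3⟩ : Fin n) = i := Fin.ext (by simp; omega)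
      rw [h2] at h1
      have h3 : f i = -(((τ (σ i) : ℕ) : ℤ)) := by simp only [hf, if_pos hi]
      have h4 : σ i = ⟨m-1-(i:ℕ), hb2⟩ := hσlt i hi
      rw [h3, h4]
      omega
    · have hb1 : (i:ℕ) - m < n - m := by have := i.isLt; omega
      have hb2 : m + 1 + ((i:ℕ) - m) < n + 1 := by have := i.isLt; omega
      have hb3 : m + ((i:ℕ) - m) < n := by have := i.isLt; omega
      have hb4 : (i:ℕ) + 1 < n + 1 := by have := i.isLt; omega
      have h1 : g ⟨m + ((i:ℕ) - m), hb3⟩ + 1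
          = ((τ ⟨m+1+((i:ℕ)-m), hb2⟩ : Fin (n+1)) : ℕ) + 1 := hgt _ hb1 hb2
      have h2 : (⟨m + ((i:ℕ) - m), hb3⟩ : Fin n) = i := Fin.ext (by simp; omega)
      rw [h2] at h1
      have h5 : (⟨m+1+((i:ℕ)-m), hb2⟩ : Fin (n+1)) = ⟨(i:ℕ)+1, hb4⟩ := Fin.ext (by simp; omega)
      rw [h5] at h1
      have h3 : f i = ((τ (σ i) : ℕ) : ℤ) := by simp only [hf, if_neg hi]
      have h4 : σ i = ⟨(i:ℕ)+1, hb4⟩ := hσge i hi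
      rw [h3, h4]
      omega
end

section
/- The inverse of Simion's restricted map is order-preserving for weak order: given a permutation τ of {1,…,n+1} with τ_i = 1, the signed permutation (−τ_{i−1}+1)(−τ_{i−2}+1)⋯(−τ₁+1)(τ_{i+1}−1)(τ_{i+2}−1)⋯(τ_{n+1}−1) defines a map from S_{n+1} to signed permutations that sends weak order covers to weak order relations. -/
/-- Cover relation of the right weak order on the symmetric group `S_{n+1}` (one-line
notation): `τ'` is obtained from `τ` by swapping two adjacent one-line entries that were
in increasing order, i.e. `τ' = τ * (k k+1)` with `τ k < τ (k+1)`. -/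
def coverA (n : ℕ) (τ τ' : Equiv.Perm (Fin (n + 1))) : Prop :=
  ∃ k : Fin n, τ k.castSucc < τ k.succ ∧
    τ' = τ * Equiv.swap k.castSucc k.succ

/-- Cover relation of the right weak order of type `B` on signed permutations in
one-line notation: either the first entry changes sign from positive to negative,
or two adjacent entries in increasing order are transposed. -/
def coverB (n : ℕ) (f g : Fin n → ℤ) : Prop :=
  (∃ h0 : 0 < n, 0 < f ⟨0, h0⟩ ∧ g ⟨0, h0⟩ = -f ⟨0, h0⟩ ∧
    ∀ k : Fin n, k ≠ ⟨0, h0⟩ → g k = f k) ∨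
  (∃ i j : Fin n, (j : ℕ) = (i : ℕ) + 1 ∧ f i < f j ∧ g i = f j ∧ g j = f i ∧
    ∀ k : Fin n, k ≠ i → k ≠ j → g k = f k)

/-- The inverse of Simion's restricted map: given `τ ∈ S_{n+1}` with `τ_i = 1` (here
0-indexed: `τ.symm 0` is the position of the least value), produce the signed permutation
`(−τ_{i−1}+1)⋯(−τ₁+1)(τ_{i+1}−1)⋯(τ_{n+1}−1)`. -/
def simionInv (n : ℕ) (τ : Equiv.Perm (Fin (n + 1))) : Fin n → ℤ :=
  fun p =>
    if h : (p : ℕ) < ((τ.symm 0 : Fin (n + 1)) : ℕ) then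
      -(((τ ⟨((τ.symm 0 : Fin (n + 1)) : ℕ) - 1 - (p : ℕ),
          by have := (τ.symm 0).isLt; omega⟩ : Fin (n + 1)) : ℕ) : ℤ)
    else
      (((τ ⟨(p : ℕ) + 1, by have := p.isLt; omega⟩ : Fin (n + 1)) : ℕ) : ℤ)

private lemma chainLemma {n : ℕ} (g : ℕ → Fin n → ℤ) (M : ℕ)
    (h : ∀ m, m < M → coverB n (g m) (g (m + 1))) :
    Relation.ReflTransGen (coverB n) (g 0) (g M) := by
  induction M with
  | zero => exact Relation.ReflTransGen.refl
  | succ M ih =>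
      exact (ih fun m hm => h m (Nat.lt_succ_of_lt hm)).tail (h M (Nat.lt_succ_self M))

private lemma simion_pos' {n : ℕ} (τ : Equiv.Perm (Fin (n + 1))) (p : Fin n) (x : Fin (n + 1))
    (h : (p : ℕ) < ((τ.symm 0 : Fin (n + 1)) : ℕ))
    (hidx : ((τ.symm 0 : Fin (n + 1)) : ℕ) - 1 - (p : ℕ) = (x : ℕ)) :
    simionInv n τ p = -(((τ x : Fin (n + 1)) : ℕ) : ℤ) := by
  simp only [simionInv]
  rw [dif_pos h]
  have h2 : ∀ y : Fin (n + 1), (y : ℕ) = (x : ℕ) →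
      -((((τ y) : Fin (n + 1)) : ℕ) : ℤ) = -((((τ x) : Fin (n + 1)) : ℕ) : ℤ) := by
    intro y hy; rw [Fin.ext hy]
  exact h2 _ hidx

private lemma simion_neg' {n : ℕ} (τ : Equiv.Perm (Fin (n + 1))) (p : Fin n) (x : Fin (n + 1))
    (h : ¬ ((p : ℕ) < ((τ.symm 0 : Fin (n + 1)) : ℕ)))
    (hidx : (p : ℕ) + 1 = (x : ℕ)) :
    simionInv n τ p = (((τ x : Fin (n + 1)) : ℕ) : ℤ) := by
  simp only [simionInv]
  rw [dif_neg h]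
  have h2 : ∀ y : Fin (n + 1), (y : ℕ) = (x : ℕ) →
      ((((τ y) : Fin (n + 1)) : ℕ) : ℤ) = ((((τ x) : Fin (n + 1)) : ℕ) : ℤ) := by
    intro y hy; rw [Fin.ext hy]
  exact h2 _ hidx

private def bub {n : ℕ} (F : Fin n → ℤ) (v : ℤ) (K : ℕ) (m : ℕ) : Fin n → ℤ := fun p =>
  if (p : ℕ) < K - m then F p
  else if (p : ℕ) = K - m then v
  else if (p : ℕ) ≤ K then F ⟨(p : ℕ) - 1, Nat.lt_of_le_of_lt (Nat.sub_le _ _) p.isLt⟩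
  else F p

private lemma bub_lt' {n : ℕ} (F : Fin n → ℤ) (v : ℤ) (K m : ℕ) (p : Fin n)
    (h : (p : ℕ) < K - m) : bub F v K m p = F p := if_pos h

private lemma bub_eq' {n : ℕ} (F : Fin n → ℤ) (v : ℤ) (K m : ℕ) (p : Fin n)
    (h : (p : ℕ) = K - m) : bub F v K m p = v := by
  simp only [bub]; rw [if_neg (by omega), if_pos h]

private lemma bub_mid' {n : ℕ} (F : Fin n → ℤ) (v : ℤ) (K m : ℕ) (p : Fin n)
    (h1 : K - m < (p : ℕ)) (h2 : (p : ℕ) ≤ K) (h3 : (p : ℕ) - 1 < n) :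
    bub F v K m p = F ⟨(p : ℕ) - 1, h3⟩ := by
  simp only [bub]; rw [if_neg (by omega), if_neg (by omega), if_pos h2]

private lemma bub_gt' {n : ℕ} (F : Fin n → ℤ) (v : ℤ) (K m : ℕ) (p : Fin n)
    (h : K < (p : ℕ)) : bub F v K m p = F p := by
  simp only [bub]; rw [if_neg (by omega), if_neg (by omega), if_neg (by omega)]

private lemma bub_zero {n : ℕ} (F : Fin n → ℤ) (v : ℤ) (K : ℕ)
    (hK : ∀ p : Fin n, (p : ℕ) = K → F p = v) : bub F v K 0 = F := by
  funext p
  rcases lt_trichotomy (p : ℕ) K with h | h | h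
  · rw [bub_lt' F v K 0 p (by omega)]
  · rw [bub_eq' F v K 0 p (by omega), hK p h]
  · rw [bub_gt' F v K 0 p h]

private lemma bub_step {n : ℕ} (F : Fin n → ℤ) (v : ℤ) (K : ℕ) (hKn : K < n)
    (hF : ∀ p : Fin n, (p : ℕ) < K → F p < v) (m : ℕ) (hm : m < K) :
    coverB n (bub F v K m) (bub F v K (m + 1)) := by
  right
  have h1 : K - m - 1 < n := by omega
  have h2 : K - m < n := by omega
  refine ⟨⟨K - m - 1, h1⟩, ⟨K - m, h2⟩, (show K - m = K - m - 1 + 1 by omega), ?_, ?_, ?_, ?_⟩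
  · rw [bub_lt' F v K m ⟨K - m - 1, h1⟩ (show K - m - 1 < K - m by omega),
      bub_eq' F v K m ⟨K - m, h2⟩ (show K - m = K - m by rfl)]
    exact hF _ (show K - m - 1 < K by omega)
  · rw [bub_eq' F v K (m + 1) ⟨K - m - 1, h1⟩ (show K - m - 1 = K - (m + 1) by omega),
      bub_eq' F v K m ⟨K - m, h2⟩ (show K - m = K - m by rfl)]
  · rw [bub_mid' F v K (m + 1) ⟨K - m, h2⟩ (show K - (m + 1) < K - m by omega)
      (show K - m ≤ K by omega) (show K - m - 1 < n from h1),
      bub_lt' F v K m ⟨K - m - 1, h1⟩ (show K - m - 1 < K - m by omega)]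
  · intro q hqi hqj
    have hq1 : (q : ℕ) ≠ K - m - 1 := fun hh => hqi (Fin.ext hh)
    have hq2 : (q : ℕ) ≠ K - m := fun hh => hqj (Fin.ext hh)
    have hqn : (q : ℕ) < n := q.isLt
    by_cases c1 : (q : ℕ) < K - m - 1
    · rw [bub_lt' F v K (m + 1) q (by omega), bub_lt' F v K m q (by omega)]
    · by_cases c2 : (q : ℕ) ≤ K
      · have hq3 : (q : ℕ) - 1 < n := by omega
        rw [bub_mid' F v K (m + 1) q (by omega) c2 hq3, bub_mid' F v K m q (by omega) c2 hq3]
      · rw [bub_gt' F v K (m + 1) q (by omega), bub_gt' F v K m q (by omega)]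

/-- The inverse of Simion's restricted map is order-preserving for the weak orders:
it sends covers in the right weak order on `S_{n+1}` to weak order relations
(reflexive-transitive closure of covers) on signed permutations of type `B`. -/
theorem stmt_10 (n : ℕ) (τ τ' : Equiv.Perm (Fin (n + 1))) (h : coverA n τ τ') :
    Relation.ReflTransGen (coverB n) (simionInv n τ) (simionInv n τ') := by
  obtain ⟨k, hlt, rfl⟩ := h
  set s := Equiv.swap k.castSucc k.succ with hs
  have hKn : (k : ℕ) < n := k.isLt
  have hIn : ((τ.symm 0 : Fin (n + 1)) : ℕ) < n + 1 := (τ.symm 0).isLt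
  have hkc : ((k.castSucc : Fin (n + 1)) : ℕ) = (k : ℕ) := rfl
  have hks : ((k.succ : Fin (n + 1)) : ℕ) = (k : ℕ) + 1 := rfl
  have hτs : ((τ k.castSucc : Fin (n + 1)) : ℕ) < ((τ k.succ : Fin (n + 1)) : ℕ) := hlt
  have hmul : ∀ x, (τ * s) x = τ (s x) := fun x => rfl
  have hsymm0 : (τ * s).symm 0 = s (τ.symm 0) := rfl
  have hfix : ∀ x : Fin (n + 1), (x : ℕ) ≠ (k : ℕ) → (x : ℕ) ≠ (k : ℕ) + 1 → s x = x := by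
    intro x hx1 hx2
    exact Equiv.swap_apply_of_ne_of_ne (fun hh => hx1 (congrArg Fin.val hh))
      (fun hh => hx2 (congrArg Fin.val hh))
  have hτ0 : τ (τ.symm 0) = 0 := τ.apply_symm_apply 0
  have hvpos : 0 < ((τ k.succ : Fin (n + 1)) : ℕ) := by omega
  have hne : ((τ.symm 0 : Fin (n + 1)) : ℕ) ≠ (k : ℕ) + 1 := by
    intro hh
    have h1 : τ.symm 0 = k.succ := Fin.ext (by rw [hh, hks])
    rw [h1] at hτ0
    have h2 := congrArg Fin.val hτ0
    simp only [Fin.val_zero] at h2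
    omega
  rcases lt_trichotomy (k : ℕ) ((τ.symm 0 : Fin (n + 1)) : ℕ) with hc | hc | hc
  · -- Case A : k + 1 < I, swap happens in the negated prefix
    have hK1 : (k : ℕ) + 1 < ((τ.symm 0 : Fin (n + 1)) : ℕ) := by omega
    have hss : (τ * s).symm 0 = τ.symm 0 := by
      rw [hsymm0]; exact hfix _ (by omega) (by omega)
    have hII : (((τ * s).symm 0 : Fin (n + 1)) : ℕ) = ((τ.symm 0 : Fin (n + 1)) : ℕ) := by
      rw [hss]
    have hp1n : ((τ.symm 0 : Fin (n + 1)) : ℕ) - 2 - (k : ℕ) < n := by omega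
    have hp2n : ((τ.symm 0 : Fin (n + 1)) : ℕ) - 1 - (k : ℕ) < n := by omega
    set p1 : Fin n := ⟨((τ.symm 0 : Fin (n + 1)) : ℕ) - 2 - (k : ℕ), hp1n⟩ with hp1def
    set p2 : Fin n := ⟨((τ.symm 0 : Fin (n + 1)) : ℕ) - 1 - (k : ℕ), hp2n⟩ with hp2def
    have hp1 : (p1 : ℕ) = ((τ.symm 0 : Fin (n + 1)) : ℕ) - 2 - (k : ℕ) := rfl
    have hp2 : (p2 : ℕ) = ((τ.symm 0 : Fin (n + 1)) : ℕ) - 1 - (k : ℕ) := rfl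
    have e1 : simionInv n τ p1 = -(((τ k.succ : Fin (n + 1)) : ℕ) : ℤ) :=
      simion_pos' τ p1 k.succ (by omega) (by omega)
    have e2 : simionInv n τ p2 = -(((τ k.castSucc : Fin (n + 1)) : ℕ) : ℤ) :=
      simion_pos' τ p2 k.castSucc (by omega) (by omega)
    have e3 : simionInv n (τ * s) p1 = -(((τ k.castSucc : Fin (n + 1)) : ℕ) : ℤ) := by
      rw [simion_pos' (τ * s) p1 k.succ (by omega) (by omega), hmul, hs,
        Equiv.swap_apply_right]
    have e4 : simionInv n (τ * s) p2 = -(((τ k.succ : Fin (n + 1)) : ℕ) : ℤ) := by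
      rw [simion_pos' (τ * s) p2 k.castSucc (by omega) (by omega), hmul, hs,
        Equiv.swap_apply_left]
    have e5 : ∀ p : Fin n, p ≠ p1 → p ≠ p2 → simionInv n (τ * s) p = simionInv n τ p := by
      intro p hq1 hq2
      have hq1' : (p : ℕ) ≠ ((τ.symm 0 : Fin (n + 1)) : ℕ) - 2 - (k : ℕ) :=
        fun hh => hq1 (Fin.ext hh)
      have hq2' : (p : ℕ) ≠ ((τ.symm 0 : Fin (n + 1)) : ℕ) - 1 - (k : ℕ) :=
        fun hh => hq2 (Fin.ext hh)
      have hpn : (p : ℕ) < n := p.isLt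
      by_cases hp : (p : ℕ) < ((τ.symm 0 : Fin (n + 1)) : ℕ)
      · have hx : ((τ.symm 0 : Fin (n + 1)) : ℕ) - 1 - (p : ℕ) < n + 1 := by omega
        have hg : ((⟨((τ.symm 0 : Fin (n + 1)) : ℕ) - 1 - (p : ℕ), hx⟩ : Fin (n + 1)) : ℕ)
            = ((τ.symm 0 : Fin (n + 1)) : ℕ) - 1 - (p : ℕ) := rfl
        rw [simion_pos' (τ * s) p ⟨((τ.symm 0 : Fin (n + 1)) : ℕ) - 1 - (p : ℕ), hx⟩
            (by omega) (by omega), hmul,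
          hfix _ (show ((τ.symm 0 : Fin (n + 1)) : ℕ) - 1 - (p : ℕ) ≠ (k : ℕ) by omega)
            (show ((τ.symm 0 : Fin (n + 1)) : ℕ) - 1 - (p : ℕ) ≠ (k : ℕ) + 1 by omega),
          simion_pos' τ p ⟨((τ.symm 0 : Fin (n + 1)) : ℕ) - 1 - (p : ℕ), hx⟩ hp rfl]
      · have hx : (p : ℕ) + 1 < n + 1 := by omega
        rw [simion_neg' (τ * s) p ⟨(p : ℕ) + 1, hx⟩ (by omega) rfl, hmul,
          hfix _ (show (p : ℕ) + 1 ≠ (k : ℕ) by omega)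
            (show (p : ℕ) + 1 ≠ (k : ℕ) + 1 by omega),
          simion_neg' τ p ⟨(p : ℕ) + 1, hx⟩ hp rfl]
    refine Relation.ReflTransGen.single (Or.inr ⟨p1, p2, by omega, ?_, ?_, ?_, ?_⟩)
    · rw [e1, e2]; omega
    · rw [e3, e2]
    · rw [e4, e1]
    · exact e5
  · -- Case B : k = I, the value 0 is at position k; bubble then sign flip
    have hI : ((τ.symm 0 : Fin (n + 1)) : ℕ) = (k : ℕ) := hc.symm
    have hss : (τ * s).symm 0 = k.succ := by
      rw [hsymm0, show τ.symm 0 = k.castSucc from Fin.ext (by omega), hs,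
        Equiv.swap_apply_left]
    have hII : (((τ * s).symm 0 : Fin (n + 1)) : ℕ) = (k : ℕ) + 1 := by rw [hss, hks]
    have hFlt : ∀ p : Fin n, (p : ℕ) < (k : ℕ) →
        simionInv n τ p < (((τ k.succ : Fin (n + 1)) : ℕ) : ℤ) := by
      intro p hp
      have hx : ((τ.symm 0 : Fin (n + 1)) : ℕ) - 1 - (p : ℕ) < n + 1 := by omega
      rw [simion_pos' τ p ⟨((τ.symm 0 : Fin (n + 1)) : ℕ) - 1 - (p : ℕ), hx⟩
        (by omega) rfl]
      omega
    have hstep : ∀ m, m < (k : ℕ) →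
        coverB n (bub (simionInv n τ) (((τ k.succ : Fin (n + 1)) : ℕ) : ℤ) (k : ℕ) m)
          (bub (simionInv n τ) (((τ k.succ : Fin (n + 1)) : ℕ) : ℤ) (k : ℕ) (m + 1)) :=
      fun m hm => bub_step _ _ _ hKn hFlt m hm
    have hzero : bub (simionInv n τ) (((τ k.succ : Fin (n + 1)) : ℕ) : ℤ) (k : ℕ) 0
        = simionInv n τ :=
      bub_zero _ _ _ (fun p hp => simion_neg' τ p k.succ (by omega) (by omega))
    have hcov : coverB n (bub (simionInv n τ) (((τ k.succ : Fin (n + 1)) : ℕ) : ℤ) (k : ℕ) (k : ℕ))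
        (simionInv n (τ * s)) := by
      left
      have h0n : 0 < n := by omega
      refine ⟨h0n, ?_, ?_, ?_⟩
      · rw [bub_eq' _ _ _ _ ⟨0, h0n⟩ (show (0 : ℕ) = (k : ℕ) - (k : ℕ) by omega)]
        omega
      · rw [bub_eq' _ _ _ _ ⟨0, h0n⟩ (show (0 : ℕ) = (k : ℕ) - (k : ℕ) by omega),
          simion_pos' (τ * s) ⟨0, h0n⟩ k.castSucc
            (show (0 : ℕ) < (((τ * s).symm 0 : Fin (n + 1)) : ℕ) by omega)
            (show (((τ * s).symm 0 : Fin (n + 1)) : ℕ) - 1 - 0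
              = ((k.castSucc : Fin (n + 1)) : ℕ) by omega),
          hmul, hs, Equiv.swap_apply_left]
      · intro q hq
        have hq0 : (q : ℕ) ≠ 0 := fun hh => hq (Fin.ext hh)
        have hqn : (q : ℕ) < n := q.isLt
        by_cases hcase : (q : ℕ) ≤ (k : ℕ)
        · have hq3 : (q : ℕ) - 1 < n := by omega
          have hx : (k : ℕ) - (q : ℕ) < n + 1 := by omega
          rw [bub_mid' _ _ _ _ q (by omega) hcase hq3,
            simion_pos' (τ * s) q ⟨(k : ℕ) - (q : ℕ), hx⟩
              (show (q : ℕ) < (((τ * s).symm 0 : Fin (n + 1)) : ℕ) by omega)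
              (show (((τ * s).symm 0 : Fin (n + 1)) : ℕ) - 1 - (q : ℕ)
                = (k : ℕ) - (q : ℕ) by omega),
            hmul,
            hfix _ (show (k : ℕ) - (q : ℕ) ≠ (k : ℕ) by omega)
              (show (k : ℕ) - (q : ℕ) ≠ (k : ℕ) + 1 by omega),
            simion_pos' τ ⟨(q : ℕ) - 1, hq3⟩ ⟨(k : ℕ) - (q : ℕ), hx⟩
              (show (q : ℕ) - 1 < ((τ.symm 0 : Fin (n + 1)) : ℕ) by omega)
              (show ((τ.symm 0 : Fin (n + 1)) : ℕ) - 1 - ((q : ℕ) - 1)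
                = (k : ℕ) - (q : ℕ) by omega)]
        · have hx : (q : ℕ) + 1 < n + 1 := by omega
          rw [bub_gt' _ _ _ _ q (by omega),
            simion_neg' (τ * s) q ⟨(q : ℕ) + 1, hx⟩
              (show ¬ ((q : ℕ) < (((τ * s).symm 0 : Fin (n + 1)) : ℕ)) by omega) rfl,
            hmul,
            hfix _ (show (q : ℕ) + 1 ≠ (k : ℕ) by omega)
              (show (q : ℕ) + 1 ≠ (k : ℕ) + 1 by omega),
            simion_neg' τ q ⟨(q : ℕ) + 1, hx⟩ (by omega) rfl]
    have main := chainLemma (bub (simionInv n τ) (((τ k.succ : Fin (n + 1)) : ℕ) : ℤ) (k : ℕ))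
      (k : ℕ) hstep
    rw [hzero] at main
    exact main.tail hcov
  · -- Case C : I < k, swap happens in the positive suffix
    have hss : (τ * s).symm 0 = τ.symm 0 := by
      rw [hsymm0]; exact hfix _ (by omega) (by omega)
    have hII : (((τ * s).symm 0 : Fin (n + 1)) : ℕ) = ((τ.symm 0 : Fin (n + 1)) : ℕ) := by
      rw [hss]
    have hp1n : (k : ℕ) - 1 < n := by omega
    set p1 : Fin n := ⟨(k : ℕ) - 1, hp1n⟩ with hp1def
    have hp1 : (p1 : ℕ) = (k : ℕ) - 1 := rfl
    have e1 : simionInv n τ p1 = (((τ k.castSucc : Fin (n + 1)) : ℕ) : ℤ) :=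
      simion_neg' τ p1 k.castSucc (by omega) (by omega)
    have e2 : simionInv n τ k = (((τ k.succ : Fin (n + 1)) : ℕ) : ℤ) :=
      simion_neg' τ k k.succ (by omega) (by omega)
    have e3 : simionInv n (τ * s) p1 = (((τ k.succ : Fin (n + 1)) : ℕ) : ℤ) := by
      rw [simion_neg' (τ * s) p1 k.castSucc (by omega) (by omega), hmul, hs,
        Equiv.swap_apply_left]
    have e4 : simionInv n (τ * s) k = (((τ k.castSucc : Fin (n + 1)) : ℕ) : ℤ) := by
      rw [simion_neg' (τ * s) k k.succ (by omega) (by omega), hmul, hs,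
        Equiv.swap_apply_right]
    have e5 : ∀ p : Fin n, p ≠ p1 → p ≠ k → simionInv n (τ * s) p = simionInv n τ p := by
      intro p hq1 hq2
      have hq1' : (p : ℕ) ≠ (k : ℕ) - 1 := fun hh => hq1 (Fin.ext hh)
      have hq2' : (p : ℕ) ≠ (k : ℕ) := fun hh => hq2 (Fin.ext hh)
      have hpn : (p : ℕ) < n := p.isLt
      by_cases hp : (p : ℕ) < ((τ.symm 0 : Fin (n + 1)) : ℕ)
      · have hx : ((τ.symm 0 : Fin (n + 1)) : ℕ) - 1 - (p : ℕ) < n + 1 := by omega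
        have hg : ((⟨((τ.symm 0 : Fin (n + 1)) : ℕ) - 1 - (p : ℕ), hx⟩ : Fin (n + 1)) : ℕ)
            = ((τ.symm 0 : Fin (n + 1)) : ℕ) - 1 - (p : ℕ) := rfl
        rw [simion_pos' (τ * s) p ⟨((τ.symm 0 : Fin (n + 1)) : ℕ) - 1 - (p : ℕ), hx⟩
            (by omega) (by omega), hmul,
          hfix _ (show ((τ.symm 0 : Fin (n + 1)) : ℕ) - 1 - (p : ℕ) ≠ (k : ℕ) by omega)
            (show ((τ.symm 0 : Fin (n + 1)) : ℕ) - 1 - (p : ℕ) ≠ (k : ℕ) + 1 by omega),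
          simion_pos' τ p ⟨((τ.symm 0 : Fin (n + 1)) : ℕ) - 1 - (p : ℕ), hx⟩ hp rfl]
      · have hx : (p : ℕ) + 1 < n + 1 := by omega
        rw [simion_neg' (τ * s) p ⟨(p : ℕ) + 1, hx⟩ (by omega) rfl, hmul,
          hfix _ (show (p : ℕ) + 1 ≠ (k : ℕ) by omega)
            (show (p : ℕ) + 1 ≠ (k : ℕ) + 1 by omega),
          simion_neg' τ p ⟨(p : ℕ) + 1, hx⟩ hp rfl]
    refine Relation.ReflTransGen.single (Or.inr ⟨p1, k, by omega, ?_, ?_, ?_, ?_⟩)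
    · rw [e1, e2]; omega
    · rw [e3, e2]
    · rw [e4, e1]
    · exact e5
end

section
/- For a finite Coxeter group W with simple generators S and J ⊆ S, the map w ↦ w_J, where w_J is the unique element of the standard parabolic subgroup W_J whose inversion set is inv(w) ∩ W_J, is a surjective lattice homomorphism from the weak order on W onto the weak order on W_J. -/
/-- The right weak order on a Coxeter group: `u ≤ w` iff `ℓ(u) + ℓ(u⁻¹w) = ℓ(w)`. -/
def weakLE {B W : Type*} [Group W] {M : CoxeterMatrix B} (cs : CoxeterSystem M W)
    (u w : W) : Prop :=
  cs.length u + cs.length (u⁻¹ * w) = cs.length w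

namespace StmtAux

open List CoxeterSystem

open scoped Classical

variable {B W : Type*} [Group W] {M : CoxeterMatrix B} (cs : CoxeterSystem M W)

local prefix:100 "σ" => cs.simple
local prefix:100 "π" => cs.wordProd
local prefix:100 "ℓ" => cs.length

noncomputable section

/-- The underlying function of the Bourbaki permutation representation on `W × ZMod 2`. -/
def phiFun (i : B) : W × ZMod 2 → W × ZMod 2 :=
  fun p => (σ i * p.1 * σ i, p.2 + if p.1 = σ i then 1 else 0)

lemma simple_conj_eq_iff (i : B) (t : W) : (σ i * t * σ i = σ i) ↔ t = σ i := by
  constructor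
  · intro h
    have h2 := congrArg (fun x => σ i * x * σ i) h
    simpa [← mul_assoc, cs.simple_mul_simple_self, mul_assoc] using h2
  · intro h
    rw [h, cs.simple_mul_simple_self, one_mul]

lemma phiFun_involutive (i : B) : Function.Involutive (phiFun cs i) := by
  rintro ⟨t, ε⟩
  simp only [phiFun]
  have h1 : σ i * (σ i * t * σ i) * σ i = t := by
    rw [← mul_assoc, ← mul_assoc, cs.simple_mul_simple_self, one_mul, mul_assoc,
      cs.simple_mul_simple_self, mul_one]
  refine Prod.ext h1 ?_
  simp only [simple_conj_eq_iff cs i t]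
  split_ifs with h
  · rw [add_assoc, show (1 + 1 : ZMod 2) = 0 from rfl, add_zero]
  · rw [add_zero, add_zero]

/-- The Bourbaki permutation associated to a simple reflection. -/
def fPerm (i : B) : Equiv.Perm (W × ZMod 2) :=
  Function.Involutive.toPerm _ (phiFun_involutive cs i)

@[simp] lemma fPerm_apply (i : B) (p : W × ZMod 2) : fPerm cs i p = phiFun cs i p := rfl

lemma ris_cons (i : B) (ω : List B) :
    cs.rightInvSeq (i :: ω) = ((π ω)⁻¹ * σ i * π ω) :: cs.rightInvSeq ω := rfl

lemma prod_map_fPerm (ω : List B) (t : W) (ε : ZMod 2) :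
    (ω.map (fPerm cs)).prod (t, ε) =
      (π ω * t * (π ω)⁻¹, ε + ((cs.rightInvSeq ω).count t : ZMod 2)) := by
  induction ω with
  | nil => simp
  | cons i ω ih =>
    rw [List.map_cons, List.prod_cons, Equiv.Perm.mul_apply, ih, fPerm_apply]
    have hcond : (π ω * t * (π ω)⁻¹ = σ i) ↔ (t = (π ω)⁻¹ * σ i * π ω) := by
      constructor
      · intro h; rw [← h]; group
      · intro h; rw [h]; group
    simp only [phiFun]
    rw [ris_cons, List.count_cons]
    refine Prod.ext ?_ ?_
    · rw [cs.wordProd_cons, mul_inv_rev, cs.inv_simple]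
      group
    · show (ε + _) + _ = ε + _
      rw [if_congr hcond rfl rfl]
      push_cast
      by_cases h : t = (π ω)⁻¹ * σ i * π ω
      · simp [h, add_assoc]
      · simp [beq_iff_eq, h, Ne.symm h, add_assoc]

lemma simple_mul_q_pow (i i' : B) (a : ℕ) :
    σ i' * (σ i * σ i') ^ a = ((σ i * σ i') ^ a)⁻¹ * σ i' := by
  induction a with
  | zero => simp
  | succ a ih =>
    have h : σ i' * (σ i * σ i') = (σ i * σ i')⁻¹ * σ i' := by
      rw [mul_inv_rev, cs.inv_simple, cs.inv_simple, mul_assoc]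
    have hc : ((σ i * σ i') ^ a)⁻¹ * (σ i * σ i')⁻¹ = (σ i * σ i')⁻¹ * ((σ i * σ i') ^ a)⁻¹ :=
      (((Commute.refl (σ i * σ i')).pow_right a).inv_inv).eq.symm
    rw [pow_succ, mul_inv_rev, ← mul_assoc, ih, mul_assoc, h, ← mul_assoc, hc]

lemma wordProd_alt_inv_mul (i i' : B) (r : ℕ) :
    (π (alternatingWord i i' r))⁻¹ * π (alternatingWord i i' (r + 1))
      = ((σ i * σ i') ^ r)⁻¹ * σ i' := by
  rw [cs.prod_alternatingWord_eq_mul_pow, cs.prod_alternatingWord_eq_mul_pow]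
  rcases Nat.even_or_odd r with he | ho
  · have h1 : ¬ Even (r + 1) := by simp [Nat.even_add_one, he]
    obtain ⟨k, hk⟩ := he
    have h2 : (r + 1) / 2 = r / 2 := by omega
    rw [if_pos ⟨k, hk⟩, if_neg h1, h2, one_mul, simple_mul_q_pow cs i i',
      ← mul_assoc, ← mul_inv_rev, ← pow_add, show r / 2 + r / 2 = r from by omega]
  · have h1 : Even (r + 1) := by simp [Nat.even_add_one, Nat.not_even_iff_odd.2 ho]
    obtain ⟨k, hk⟩ := ho
    have h2 : (r + 1) / 2 = r / 2 + 1 := by omega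
    rw [if_neg (Nat.not_even_iff_odd.2 ⟨k, hk⟩), if_pos h1, h2, one_mul, mul_inv_rev, cs.inv_simple,
      mul_assoc, simple_mul_q_pow cs i i', ← mul_assoc, ← mul_inv_rev, ← pow_add,
      show r / 2 + 1 + r / 2 = r from by omega]

lemma rightInvSeq_alternatingWord (i i' : B) (n : ℕ) :
    cs.rightInvSeq (alternatingWord i i' n)
      = (List.range n).map (fun j => ((σ i * σ i') ^ (n - 1 - j))⁻¹ * σ i') := by
  induction n with
  | zero => simp [alternatingWord]
  | succ n ih =>
    rw [alternatingWord_succ' i i' n]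
    rw [ris_cons, ih, List.range_succ_eq_map, List.map_cons, List.map_map]
    congr 1
    · have hh : σ (if Even n then i' else i) * π (alternatingWord i i' n)
          = π (alternatingWord i i' (n + 1)) := by
        rw [alternatingWord_succ' i i' n, cs.wordProd_cons]
      rw [mul_assoc, hh, wordProd_alt_inv_mul cs i i',
        show n + 1 - 1 - 0 = n from by omega]
    · apply List.map_congr_left
      intro j _
      simp only [Function.comp]
      rw [show n + 1 - 1 - (j + 1) = n - 1 - j from by omega]

lemma count_ris_alt_even (i i' : B) (m : ℕ) (hq : (σ i * σ i') ^ m = 1) (t : W) :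
    Even ((cs.rightInvSeq (alternatingWord i i' (2 * m))).count t) := by
  rw [rightInvSeq_alternatingWord, show 2 * m = m + m from by omega, List.range_add,
    List.map_append, List.count_append]
  have hmap : ((List.range m).map (fun j => ((σ i * σ i') ^ (m + m - 1 - j))⁻¹ * σ i'))
      = ((List.range m).map fun j => ((σ i * σ i') ^ (m + m - 1 - (m + j)))⁻¹ * σ i') := by
    apply List.map_congr_left
    intro j hj
    rw [List.mem_range] at hj
    have h1 : m + m - 1 - j = m + (m - 1 - j) := by omega
    have h2 : m + m - 1 - (m + j) = m - 1 - j := by omega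
    rw [h1, h2, pow_add, hq, one_mul]
  rw [hmap, List.map_map]
  exact ⟨_, rfl⟩

lemma isLiftable : M.IsLiftable (fPerm cs) := by
  intro i i'
  have key : ∀ k : ℕ, (fPerm cs i * fPerm cs i') ^ k
      = ((alternatingWord i i' (2 * k)).map (fPerm cs)).prod := by
    intro k
    induction k with
    | zero => simp [alternatingWord]
    | succ k ih =>
      have h1 : 2 * (k + 1) = (2 * k + 1) + 1 := by omega
      rw [h1, alternatingWord_succ' i i', alternatingWord_succ' i i']
      have he1 : ¬ Even (2 * k + 1) := by simp [Nat.even_add_one]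
      have he2 : Even (2 * k) := ⟨k, by omega⟩
      rw [if_neg he1, if_pos he2, List.map_cons, List.map_cons, List.prod_cons, List.prod_cons,
        ← ih, pow_succ', mul_assoc]
  rw [key (M i i')]
  apply Equiv.ext
  rintro ⟨t, ε⟩
  rw [prod_map_fPerm]
  have hq : (σ i * σ i') ^ M i i' = 1 := cs.simple_mul_simple_pow i i'
  have hπ : π (alternatingWord i i' (2 * M i i')) = 1 := by
    rw [cs.prod_alternatingWord_eq_mul_pow, if_pos ⟨M i i', by omega⟩,
      show 2 * M i i' / 2 = M i i' from by omega, one_mul, hq]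
  obtain ⟨c, hc⟩ := count_ris_alt_even cs i i' (M i i') hq t
  rw [hπ, hc]
  have hcast : ((c + c : ℕ) : ZMod 2) = 0 := by
    push_cast
    rw [← two_mul, show (2 : ZMod 2) = 0 from rfl, zero_mul]
  rw [hcast, add_zero]
  simp

/-- The Bourbaki representation `W →* Equiv.Perm (W × ZMod 2)`. -/
noncomputable def Phi : W →* Equiv.Perm (W × ZMod 2) := cs.lift ⟨fPerm cs, isLiftable cs⟩

lemma Phi_simple (i : B) : Phi cs (σ i) = fPerm cs i := cs.lift_apply_simple (isLiftable cs) i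

lemma Phi_wordProd (ω : List B) (t : W) (ε : ZMod 2) :
    Phi cs (π ω) (t, ε) = (π ω * t * (π ω)⁻¹, ε + ((cs.rightInvSeq ω).count t : ZMod 2)) := by
  have h : Phi cs (π ω) = (ω.map (fPerm cs)).prod := by
    unfold CoxeterSystem.wordProd
    rw [map_list_prod, List.map_map]
    congr 1
    apply List.map_congr_left
    intro i _
    exact Phi_simple cs i
  rw [h, prod_map_fPerm]

/-- `nu cs w t` is the parity of the number of occurrences of `t` in a right
inversion sequence of any word for `w`. -/
noncomputable def nu (w t : W) : ZMod 2 := (Phi cs w (t, 0)).2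

lemma nu_wordProd (ω : List B) (t : W) :
    nu cs (π ω) t = ((cs.rightInvSeq ω).count t : ZMod 2) := by
  unfold nu
  rw [Phi_wordProd, zero_add]

lemma Phi_apply (w t : W) (ε : ZMod 2) : Phi cs w (t, ε) = (w * t * w⁻¹, ε + nu cs w t) := by
  obtain ⟨ω, _, rfl⟩ := cs.exists_reduced_word' w
  rw [Phi_wordProd, nu_wordProd]

lemma nu_mul (a b t : W) : nu cs (a * b) t = nu cs b t + nu cs a (b * t * b⁻¹) := by
  have h : Phi cs (a * b) (t, 0) = Phi cs a (Phi cs b (t, 0)) := by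
    rw [map_mul]; rfl
  unfold nu
  rw [h, Phi_apply cs b t 0, Phi_apply cs a (b * t * b⁻¹) (0 + nu cs b t), zero_add]
  rfl

lemma nu_simple (i : B) (t : W) : nu cs (σ i) t = if t = σ i then 1 else 0 := by
  unfold nu
  rw [Phi_simple, fPerm_apply]
  simp [phiFun]

lemma nu_one (t : W) : nu cs 1 t = 0 := by
  unfold nu
  rw [map_one]
  rfl

lemma zmod2_cases (x : ZMod 2) : x = 0 ∨ x = 1 := by
  fin_cases x
  · left; rfl
  · right; rfl

lemma nu_refl {t : W} (ht : cs.IsReflection t) : nu cs t t = 1 := by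
  obtain ⟨u, j, rfl⟩ := ht
  have hc1 : (σ j * u⁻¹) * (u * σ j * u⁻¹) * (σ j * u⁻¹)⁻¹ = σ j := by
    rw [mul_inv_rev, inv_inv, cs.inv_simple]
    simp [mul_assoc, cs.simple_mul_simple_self]
  have hc2 : u⁻¹ * (u * σ j * u⁻¹) * u⁻¹⁻¹ = σ j := by
    rw [inv_inv]
    simp [mul_assoc, cs.simple_mul_simple_self]
  have hstep1 : nu cs (u * σ j * u⁻¹) (u * σ j * u⁻¹)
      = nu cs (σ j * u⁻¹) (u * σ j * u⁻¹) + nu cs u (σ j) := by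
    have h := nu_mul cs u (σ j * u⁻¹) (u * σ j * u⁻¹)
    rw [hc1, ← mul_assoc] at h
    exact h
  have hstep2 : nu cs (σ j * u⁻¹) (u * σ j * u⁻¹) = nu cs u⁻¹ (u * σ j * u⁻¹) + 1 := by
    have h := nu_mul cs (σ j) u⁻¹ (u * σ j * u⁻¹)
    rw [hc2, nu_simple, if_pos rfl] at h
    exact h
  have hstep3 : nu cs u (σ j) + nu cs u⁻¹ (u * σ j * u⁻¹) = 0 := by
    have h := nu_mul cs u⁻¹ u (σ j)
    rw [inv_mul_cancel, nu_one] at h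
    exact h.symm
  rw [hstep1, hstep2]
  linear_combination hstep3

lemma isRightInversion_of_nu {t : W} (ht : cs.IsReflection t) {w : W}
    (h : nu cs w t = 1) : cs.IsRightInversion w t := by
  obtain ⟨ω, hred, rfl⟩ := cs.exists_reduced_word' w
  rw [nu_wordProd] at h
  have hmem : t ∈ cs.rightInvSeq ω := by
    by_contra hc
    rw [List.count_eq_zero_of_not_mem hc] at h
    simp at h
  exact cs.isRightInversion_of_mem_rightInvSeq hred hmem

lemma isRightInversion_iff_nu {t : W} (ht : cs.IsReflection t) (w : W) :
    cs.IsRightInversion w t ↔ nu cs w t = 1 := by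
  constructor
  · intro h
    rcases zmod2_cases (nu cs w t) with h0 | h1
    · exfalso
      have hc : t * t * t⁻¹ = t := by rw [ht.mul_self, one_mul, ht.inv]
      have hwt : nu cs (w * t) t = 1 := by
        rw [nu_mul, hc, nu_refl cs ht, h0, add_zero]
      have h2 := (isRightInversion_of_nu cs ht hwt).2
      rw [mul_assoc, ht.mul_self, mul_one] at h2
      exact Nat.lt_asymm h.2 h2
    · exact h1
  · exact isRightInversion_of_nu cs ht

lemma isLeftInversion_iff_nu {t : W} (ht : cs.IsReflection t) (w : W) :
    cs.IsLeftInversion w t ↔ nu cs w⁻¹ t = 1 := by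
  rw [← cs.isRightInversion_inv_iff]
  exact isRightInversion_iff_nu cs ht w⁻¹

lemma isReflection_simple_conj {t : W} (ht : cs.IsReflection t) (i : B) :
    cs.IsReflection (σ i * t * σ i) := by
  have h := ht.conj (σ i)
  rwa [cs.inv_simple] at h

lemma isLeftInversion_simple_mul_iff {i : B} {t : W} (ht : cs.IsReflection t)
    (hne : t ≠ σ i) (w : W) :
    cs.IsLeftInversion (σ i * w) t ↔ cs.IsLeftInversion w (σ i * t * σ i) := by
  rw [isLeftInversion_iff_nu cs ht, isLeftInversion_iff_nu cs (isReflection_simple_conj cs ht i)]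
  rw [mul_inv_rev, cs.inv_simple, nu_mul, nu_simple, if_neg hne, zero_add, cs.inv_simple]

lemma isLeftInversion_mul {x y t : W} (h : cs.IsLeftInversion (x * y) t) :
    cs.IsLeftInversion x t ∨ ∃ r, cs.IsLeftInversion y r ∧ t = x * r * x⁻¹ := by
  have ht := h.1
  rw [isLeftInversion_iff_nu cs ht, mul_inv_rev, nu_mul, inv_inv] at h
  rcases zmod2_cases (nu cs x⁻¹ t) with h0 | h1
  · right
    have hr : cs.IsReflection (x⁻¹ * t * x) := by
      have hh := ht.conj x⁻¹
      rwa [inv_inv] at hh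
    refine ⟨x⁻¹ * t * x, ?_, by group⟩
    rw [isLeftInversion_iff_nu cs hr]
    rw [h0, zero_add] at h
    exact h
  · left
    exact (isLeftInversion_iff_nu cs ht x).2 h1

lemma isLeftInversion_inv {x t : W} (h : cs.IsLeftInversion x⁻¹ t) :
    ∃ r, cs.IsLeftInversion x r ∧ t = x⁻¹ * r * x := by
  refine ⟨x * t * x⁻¹, ⟨h.1.conj x, ?_⟩, by group⟩
  have h1 : x * t * x⁻¹ * x = x * t := by group
  have h2 : ℓ (x * t) = ℓ (t * x⁻¹) := by
    rw [← cs.length_inv (x * t), mul_inv_rev, h.1.inv]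
  rw [h1, h2, ← cs.length_inv x]
  exact h.2

lemma weakLE_iff_subset (u w : W) :
    weakLE cs u w ↔ ∀ t, cs.IsLeftInversion u t → cs.IsLeftInversion w t := by
  constructor
  · intro h t ht
    refine ⟨ht.1, ?_⟩
    have hw : t * w = (t * u) * (u⁻¹ * w) := by group
    calc ℓ (t * w) = ℓ ((t * u) * (u⁻¹ * w)) := by rw [hw]
      _ ≤ ℓ (t * u) + ℓ (u⁻¹ * w) := cs.length_mul_le _ _
      _ < ℓ u + ℓ (u⁻¹ * w) := by have := ht.2; omega
      _ = ℓ w := h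
  · intro h
    have key : ∀ n (u w : W), ℓ u ≤ n →
        (∀ t, cs.IsLeftInversion u t → cs.IsLeftInversion w t) → weakLE cs u w := by
      intro n
      induction n with
      | zero =>
        intro u w hu _
        have h1 : u = 1 := cs.length_eq_zero_iff.1 (Nat.le_zero.1 hu)
        subst h1
        unfold weakLE
        simp
      | succ n ih =>
        intro u w hu hsub
        by_cases h1 : u = 1
        · subst h1
          unfold weakLE
          simp
        · obtain ⟨i, hi⟩ := cs.exists_leftDescent_of_ne_one h1
          have hsi : cs.IsLeftInversion u (σ i) :=
            (cs.isLeftInversion_simple_iff_isLeftDescent u i).2 hi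
          have hsw : cs.IsLeftInversion w (σ i) := hsub _ hsi
          have hlu : ℓ (σ i * u) + 1 = ℓ u := by
            rcases cs.length_simple_mul u i with hh | hh
            · exfalso; have := hi; unfold CoxeterSystem.IsLeftDescent at this; omega
            · exact hh
          have hlw : ℓ (σ i * w) + 1 = ℓ w := by
            rcases cs.length_simple_mul w i with hh | hh
            · exfalso; have := hsw.2; omega
            · exact hh
          have hsub' : ∀ t, cs.IsLeftInversion (σ i * u) t → cs.IsLeftInversion (σ i * w) t := by
            intro t ht
            have htr := ht.1
            have hne : t ≠ σ i := by
              rintro rfl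
              have h2 := ht.2
              rw [← mul_assoc, cs.simple_mul_simple_self, one_mul] at h2
              omega
            rw [isLeftInversion_simple_mul_iff cs htr hne] at ht
            exact (isLeftInversion_simple_mul_iff cs htr hne w).2 (hsub _ ht)
          have hle := ih (σ i * u) (σ i * w) (by omega) hsub'
          unfold weakLE at hle ⊢
          have hinv : (σ i * u)⁻¹ * (σ i * w) = u⁻¹ * w := by group
          rw [hinv] at hle
          omega
    exact key (ℓ u) u w le_rfl h

lemma weakLE_antisymm {u w : W} (h1 : weakLE cs u w) (h2 : weakLE cs w u) : u = w := by
  unfold weakLE at h1 h2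
  have hw : ℓ (w⁻¹ * u) = ℓ (u⁻¹ * w) := by
    rw [← cs.length_inv (u⁻¹ * w), mul_inv_rev, inv_inv]
  have h0 : ℓ (u⁻¹ * w) = 0 := by omega
  have := cs.length_eq_zero_iff.1 h0
  exact inv_mul_eq_one.1 this

lemma weakLE_trans {a b c : W} (h1 : weakLE cs a b) (h2 : weakLE cs b c) : weakLE cs a c := by
  rw [weakLE_iff_subset] at h1 h2 ⊢
  exact fun t ht => h2 t (h1 t ht)

lemma eq_of_inversions_eq {u w : W}
    (h : ∀ t, cs.IsLeftInversion u t ↔ cs.IsLeftInversion w t) : u = w :=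
  weakLE_antisymm cs ((weakLE_iff_subset cs u w).2 fun t ht => (h t).1 ht)
    ((weakLE_iff_subset cs w u).2 fun t ht => (h t).2 ht)

lemma inversion_mem_closure {J : Set B} (v : W) (hv : v ∈ Subgroup.closure (cs.simple '' J)) :
    ∀ t, cs.IsLeftInversion v t → t ∈ Subgroup.closure (cs.simple '' J) := by
  induction hv using Subgroup.closure_induction with
  | mem x hx =>
    obtain ⟨j, hj, rfl⟩ := hx
    intro t ht
    have h1 : ℓ (t * σ j) < 1 := by
      have := ht.2
      rwa [cs.length_simple] at this
    have h2 : t * σ j = 1 := cs.length_eq_zero_iff.1 (by omega)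
    have h3 : t = σ j := by
      have := mul_eq_one_iff_eq_inv.1 h2
      rwa [cs.inv_simple] at this
    subst h3
    exact Subgroup.subset_closure ⟨j, hj, rfl⟩
  | one =>
    intro t ht
    exfalso
    have := ht.2
    rw [mul_one, cs.length_one] at this
    omega
  | mul x y hx hy ihx ihy =>
    intro t ht
    rcases isLeftInversion_mul cs ht with h | ⟨r, hr, rfl⟩
    · exact ihx t h
    · exact Subgroup.mul_mem _ (Subgroup.mul_mem _ hx (ihy r hr)) (Subgroup.inv_mem _ hx)
  | inv x hx ihx =>
    intro t ht
    obtain ⟨r, hr, rfl⟩ := isLeftInversion_inv cs ht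
    exact Subgroup.mul_mem _ (Subgroup.mul_mem _ (Subgroup.inv_mem _ hx) (ihx r hr)) hx

end

end StmtAux


/-- For a finite Coxeter group `W` and `J ⊆ S`, the map `w ↦ w_J` — where `w_J` is the
unique element of the standard parabolic subgroup `W_J` whose inversion set is
`inv(w) ∩ W_J` — is a surjective lattice homomorphism from the weak order on `W`
onto the weak order on `W_J`.  Here `inf` and `sup` are the meet and join of the
weak order lattice on `W`. -/
theorem stmt_13 {B W : Type*} [Group W] [Finite W] {M : CoxeterMatrix B}
    (cs : CoxeterSystem M W) (J : Set B)
    -- the standard parabolic subgroup W_J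
    (WJ : Subgroup W) (hWJ : WJ = Subgroup.closure (cs.simple '' J))
    -- the weak order on W is a lattice with meet `inf` and join `sup`
    (inf sup : W → W → W)
    (hinf : ∀ u w : W, weakLE cs (inf u w) u ∧ weakLE cs (inf u w) w ∧
      ∀ v : W, weakLE cs v u → weakLE cs v w → weakLE cs v (inf u w))
    (hsup : ∀ u w : W, weakLE cs u (sup u w) ∧ weakLE cs w (sup u w) ∧
      ∀ v : W, weakLE cs u v → weakLE cs w v → weakLE cs (sup u w) v)
    -- the parabolic projection: ηJ w ∈ W_J and inv(ηJ w) = inv(w) ∩ W_J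
    (ηJ : W → W)
    (hηJ : ∀ w : W, ηJ w ∈ WJ ∧
      ∀ t : W, (cs.IsLeftInversion (ηJ w) t ↔ cs.IsLeftInversion w t ∧ t ∈ WJ)) :
    -- ηJ is surjective onto W_J and preserves meets and joins
    (∀ v : W, v ∈ WJ → ∃ w : W, ηJ w = v) ∧
    (∀ u w : W, ηJ (inf u w) = inf (ηJ u) (ηJ w)) ∧
    (∀ u w : W, ηJ (sup u w) = sup (ηJ u) (ηJ w)) := by
  classical
  have hInv : ∀ w t, cs.IsLeftInversion (ηJ w) t ↔ (cs.IsLeftInversion w t ∧ t ∈ WJ) :=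
    fun w => (hηJ w).2
  have hle := fun u w => StmtAux.weakLE_iff_subset cs u w
  have htrans : ∀ a b c : W, weakLE cs a b → weakLE cs b c → weakLE cs a c :=
    fun _ _ _ h1 h2 => StmtAux.weakLE_trans cs h1 h2
  have hmemJ : ∀ v ∈ WJ, ∀ t, cs.IsLeftInversion v t → t ∈ WJ := by
    intro v hv t ht
    rw [hWJ] at hv ⊢
    exact StmtAux.inversion_mem_closure cs v hv t ht
  have etaLe : ∀ x : W, weakLE cs (ηJ x) x := fun x =>
    (hle _ _).2 fun t ht => ((hInv x t).1 ht).1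
  have etaMono : ∀ x y : W, weakLE cs x y → weakLE cs (ηJ x) (ηJ y) := by
    intro x y h
    refine (hle _ _).2 fun t ht => ?_
    rw [hInv] at ht ⊢
    exact ⟨(hle x y).1 h t ht.1, ht.2⟩
  -- the longest element
  haveI : Nonempty W := ⟨1⟩
  obtain ⟨w0, hw0⟩ := Finite.exists_max (fun x : W => cs.length x)
  have hinvw0 : ∀ (x t : W), cs.IsLeftInversion x t → cs.IsLeftInversion w0 t := by
    intro x t ht
    exact ⟨ht.1, lt_of_le_of_ne (hw0 (t * w0)) (ht.1.length_mul_right_ne w0)⟩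
  have hlenw0 : ∀ x : W, cs.length (x * w0) + cs.length x = cs.length w0 := by
    intro x
    have h := (hle x⁻¹ w0).2 fun t ht => hinvw0 x⁻¹ t ht
    unfold weakLE at h
    rw [inv_inv, cs.length_inv] at h
    omega
  have hinvw0mul : ∀ x t, cs.IsLeftInversion (x * w0) t ↔
      (cs.IsReflection t ∧ ¬ cs.IsLeftInversion x t) := by
    intro x t
    constructor
    · intro ht
      refine ⟨ht.1, fun hc => ?_⟩
      have e1 := hlenw0 x
      have e2 := hlenw0 (t * x)
      have h3 := ht.2
      rw [← mul_assoc] at h3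
      have h4 := hc.2
      omega
    · rintro ⟨htr, hnc⟩
      have hne : cs.length (t * x) ≠ cs.length x := htr.length_mul_right_ne x
      have h5 : ¬ cs.length (t * x) < cs.length x := fun hh => hnc ⟨htr, hh⟩
      refine ⟨htr, ?_⟩
      rw [← mul_assoc]
      have e1 := hlenw0 x
      have e2 := hlenw0 (t * x)
      omega
  refine ⟨?_, ?_, ?_⟩
  · -- surjectivity onto W_J
    intro v hv
    refine ⟨v, StmtAux.eq_of_inversions_eq cs fun t => ?_⟩
    rw [hInv]
    exact ⟨fun h => h.1, fun h => ⟨h, hmemJ v hv t h⟩⟩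
  · -- ηJ preserves meets
    intro u w
    obtain ⟨hmu, hmw, hml⟩ := hinf u w
    obtain ⟨hmu', hmw', hml'⟩ := hinf (ηJ u) (ηJ w)
    have hA : weakLE cs (ηJ (inf u w)) (inf (ηJ u) (ηJ w)) :=
      hml' _ (etaMono _ _ hmu) (etaMono _ _ hmw)
    have hB : weakLE cs (inf (ηJ u) (ηJ w)) (ηJ (inf u w)) := by
      refine (hle _ _).2 fun t ht => ?_
      have h1 : weakLE cs (inf (ηJ u) (ηJ w)) (inf u w) :=
        hml _ (htrans _ _ _ hmu' (etaLe u)) (htrans _ _ _ hmw' (etaLe w))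
      have htJ : t ∈ WJ := ((hInv u t).1 ((hle _ _).1 hmu' t ht)).2
      exact (hInv _ t).2 ⟨(hle _ _).1 h1 t ht, htJ⟩
    exact StmtAux.weakLE_antisymm cs hA hB
  · -- ηJ preserves joins
    intro u w
    obtain ⟨hzu, hzw, hzl⟩ := hsup u w
    obtain ⟨hsu', hsw', hsl'⟩ := hsup (ηJ u) (ηJ w)
    have hInvζ : ∀ x t, cs.IsLeftInversion (ηJ (x * w0) * w0) t ↔
        (cs.IsReflection t ∧ (t ∈ WJ → cs.IsLeftInversion x t)) := by
      intro x t
      rw [hinvw0mul (ηJ (x * w0)) t, hInv, hinvw0mul x t]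
      constructor
      · rintro ⟨htr, hn⟩
        refine ⟨htr, fun hJ => ?_⟩
        by_contra hc
        exact hn ⟨⟨htr, hc⟩, hJ⟩
      · rintro ⟨htr, himp⟩
        exact ⟨htr, fun hc => hc.1.2 (himp hc.2)⟩
    have hζdep : ∀ x, ηJ (x * w0) * w0 = ηJ (ηJ x * w0) * w0 := by
      intro x
      apply StmtAux.eq_of_inversions_eq cs
      intro t
      rw [hInvζ, hInvζ]
      constructor
      · rintro ⟨htr, himp⟩
        exact ⟨htr, fun hJ => (hInv x t).2 ⟨himp hJ, hJ⟩⟩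
      · rintro ⟨htr, himp⟩
        exact ⟨htr, fun hJ => ((hInv x t).1 (himp hJ)).1⟩
    have hxleζ : ∀ x, weakLE cs x (ηJ (x * w0) * w0) := fun x =>
      (hle _ _).2 fun t ht => (hInvζ x t).2 ⟨ht.1, fun _ => ht⟩
    have hζmono : ∀ x y, weakLE cs x y →
        weakLE cs (ηJ (x * w0) * w0) (ηJ (y * w0) * w0) := by
      intro x y h
      refine (hle _ _).2 fun t ht => ?_
      rw [hInvζ] at ht ⊢
      exact ⟨ht.1, fun hJ => (hle x y).1 h t (ht.2 hJ)⟩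
    have huζ : weakLE cs u (ηJ (sup (ηJ u) (ηJ w) * w0) * w0) := by
      have h1 := hxleζ u
      rw [hζdep u] at h1
      exact htrans _ _ _ h1 (hζmono _ _ hsu')
    have hwζ : weakLE cs w (ηJ (sup (ηJ u) (ηJ w) * w0) * w0) := by
      have h1 := hxleζ w
      rw [hζdep w] at h1
      exact htrans _ _ _ h1 (hζmono _ _ hsw')
    have hzζ : weakLE cs (sup u w) (ηJ (sup (ηJ u) (ηJ w) * w0) * w0) := hzl _ huζ hwζ
    have hB : weakLE cs (ηJ (sup u w)) (sup (ηJ u) (ηJ w)) := by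
      refine (hle _ _).2 fun t ht => ?_
      rw [hInv] at ht
      have h1 := (hle _ _).1 hzζ t ht.1
      rw [hInvζ] at h1
      exact h1.2 ht.2
    have hA : weakLE cs (sup (ηJ u) (ηJ w)) (ηJ (sup u w)) :=
      hsl' _ (etaMono _ _ hzu) (etaMono _ _ hzw)
    exact StmtAux.weakLE_antisymm cs hB hA
end

section
/- Let L be a finite lattice, Γ and Γ̃ sets of join-irreducible elements, Ψ and Ψ̃ the congruences they generate, and I the set of join-irreducibles contracted by Ψ. Then the congruence (Ψ ∨ Ψ̃)/Ψ on L/Ψ is generated by the join-irreducible elements {[j]_Ψ : j ∈ Γ̃ \ I}. -/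
section

variable {L : Type*} [Lattice L]

/-- A lattice congruence: an equivalence relation compatible with meet and join. -/
def IsLatCong (Θ : L → L → Prop) : Prop :=
  Equivalence Θ ∧ ∀ x₁ y₁ x₂ y₂ : L, Θ x₁ y₁ → Θ x₂ y₂ →
    Θ (x₁ ⊓ x₂) (y₁ ⊓ y₂) ∧ Θ (x₁ ⊔ x₂) (y₁ ⊔ y₂)

/-- `j` is join-irreducible: it covers exactly one element. -/
def JoinIrred (j : L) : Prop := ∃! a : L, a ⋖ j

/-- `Θ` contracts the join-irreducible `j`: `j ≡ j₊` for its unique lower cover. -/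
def Contracts (Θ : L → L → Prop) (j : L) : Prop := ∀ a : L, a ⋖ j → Θ j a

/-- The finest lattice congruence contracting every join-irreducible in `G`. -/
def CongGen (G : Set L) : L → L → Prop :=
  fun x y => ∀ Θ : L → L → Prop, IsLatCong Θ → (∀ j ∈ G, Contracts Θ j) → Θ x y

/-- The join `Ψ ∨ Ψ'` in `Con(L)`: the finest congruence containing both. -/
def CongJoin2 (Ψ Ψ' : L → L → Prop) : L → L → Prop :=
  fun x y => ∀ Θ : L → L → Prop, IsLatCong Θ →
    (∀ a b : L, Ψ a b → Θ a b) → (∀ a b : L, Ψ' a b → Θ a b) → Θ x y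

/-- The order on the quotient `L/Ψ`: `q ≤ q'` iff some representatives compare. -/
def qle (Ψ : L → L → Prop) (q q' : Quot Ψ) : Prop :=
  ∃ x y : L, Quot.mk Ψ x = q ∧ Quot.mk Ψ y = q' ∧ x ≤ y

/-- Strict order on the quotient. -/
def qlt (Ψ : L → L → Prop) (q q' : Quot Ψ) : Prop := qle Ψ q q' ∧ ¬ qle Ψ q' q

/-- Cover relation on the quotient. -/
def qcov (Ψ : L → L → Prop) (q q' : Quot Ψ) : Prop :=
  qlt Ψ q q' ∧ ∀ z : Quot Ψ, qlt Ψ q z → qlt Ψ z q' → False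

/-- Join-irreducibility in the quotient: exactly one lower cover. -/
def qJoinIrred (Ψ : L → L → Prop) (q : Quot Ψ) : Prop := ∃! p : Quot Ψ, qcov Ψ p q

/-- A lattice congruence on the quotient `L/Ψ` (whose meet and join are computed
on representatives). -/
def qIsLatCong (Ψ : L → L → Prop) (R : Quot Ψ → Quot Ψ → Prop) : Prop :=
  Equivalence R ∧ ∀ x₁ y₁ x₂ y₂ : L,
    R (Quot.mk Ψ x₁) (Quot.mk Ψ y₁) → R (Quot.mk Ψ x₂) (Quot.mk Ψ y₂) →
    R (Quot.mk Ψ (x₁ ⊓ x₂)) (Quot.mk Ψ (y₁ ⊓ y₂)) ∧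
    R (Quot.mk Ψ (x₁ ⊔ x₂)) (Quot.mk Ψ (y₁ ⊔ y₂))

/-- `R` contracts the join-irreducible `j` of the quotient. -/
def qContracts (Ψ : L → L → Prop) (R : Quot Ψ → Quot Ψ → Prop) (j : Quot Ψ) : Prop :=
  ∀ a : Quot Ψ, qcov Ψ a j → R j a

/-- The finest congruence on the quotient contracting every join-irreducible in `G`. -/
def qCongGen (Ψ : L → L → Prop) (G : Set (Quot Ψ)) : Quot Ψ → Quot Ψ → Prop :=
  fun q q' => ∀ R : Quot Ψ → Quot Ψ → Prop, qIsLatCong Ψ R →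
    (∀ j ∈ G, qContracts Ψ R j) → R q q'

end

/-!
If `Ψ` does not contract the join-irreducible `j`, with lower cover `j₊`, then every class
strictly below `[j]` in `L/Ψ` lies below `[j₊]` (in a finite lattice everything strictly
below `j` lies below `j₊`), so `[j]` is join-irreducible in `L/Ψ` with lower cover `[j₊]`.
Congruences `R` on `L/Ψ` correspond to congruences on `L` containing `Ψ`, by pulling back
along `L → L/Ψ`, and `R` contracts `[j]` exactly when its pullback contracts `j`. The
elements of `Γ̃` already contracted by `Ψ` impose no condition, so both sides of the
correspondence describe the least congruence containing `Ψ` and contracting `Γ̃`.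
-/

section

variable {L : Type*} [Lattice L]

theorem congGen_isLatCong (G : Set L) : IsLatCong (CongGen G) := by
  refine ⟨⟨fun x Θ hΘ _ => hΘ.1.refl x,
    fun h Θ hΘ hG => hΘ.1.symm (h Θ hΘ hG),
    fun h₁ h₂ Θ hΘ hG => hΘ.1.trans (h₁ Θ hΘ hG) (h₂ Θ hΘ hG)⟩, ?_⟩
  intro x₁ y₁ x₂ y₂ h₁ h₂
  exact ⟨fun Θ hΘ hG => (hΘ.2 _ _ _ _ (h₁ Θ hΘ hG) (h₂ Θ hΘ hG)).1,
    fun Θ hΘ hG => (hΘ.2 _ _ _ _ (h₁ Θ hΘ hG) (h₂ Θ hΘ hG)).2⟩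

theorem congGen_contracts {G : Set L} {j : L} (hj : j ∈ G) : Contracts (CongGen G) j :=
  fun a ha _ _ hG => hG j hj a ha

theorem congJoin2_isLatCong (Ψ Ψ' : L → L → Prop) : IsLatCong (CongJoin2 Ψ Ψ') := by
  refine ⟨⟨fun x Θ hΘ _ _ => hΘ.1.refl x,
    fun h Θ hΘ h₁ h₂ => hΘ.1.symm (h Θ hΘ h₁ h₂),
    fun ha hb Θ hΘ h₁ h₂ => hΘ.1.trans (ha Θ hΘ h₁ h₂) (hb Θ hΘ h₁ h₂)⟩, ?_⟩
  intro x₁ y₁ x₂ y₂ h₁ h₂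
  exact ⟨fun Θ hΘ ha hb => (hΘ.2 _ _ _ _ (h₁ Θ hΘ ha hb) (h₂ Θ hΘ ha hb)).1,
    fun Θ hΘ ha hb => (hΘ.2 _ _ _ _ (h₁ Θ hΘ ha hb) (h₂ Θ hΘ ha hb)).2⟩

theorem congJoin2_of_left {Ψ Ψ' : L → L → Prop} {a b : L} (h : Ψ a b) : CongJoin2 Ψ Ψ' a b :=
  fun _ _ h₁ _ => h₁ a b h

theorem congJoin2_of_right {Ψ Ψ' : L → L → Prop} {a b : L} (h : Ψ' a b) :
    CongJoin2 Ψ Ψ' a b :=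
  fun _ _ _ h₂ => h₂ a b h

theorem JoinIrred.eq_of_covBy {j a b : L} (hj : JoinIrred j) (ha : a ⋖ j) (hb : b ⋖ j) :
    a = b :=
  hj.unique ha hb

theorem JoinIrred.contracts_iff {Θ : L → L → Prop} {j c : L} (hj : JoinIrred j) (hc : c ⋖ j) :
    Contracts Θ j ↔ Θ j c :=
  ⟨fun h => h c hc, fun h _ ha => hj.eq_of_covBy ha hc ▸ h⟩

theorem JoinIrred.le_of_lt [IsStronglyCoatomic L] {j c x : L} (hj : JoinIrred j)
    (hc : c ⋖ j) (hx : x < j) : x ≤ c := by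
  obtain ⟨m, hxm, hm⟩ := exists_le_covBy_of_lt hx
  exact hj.eq_of_covBy hm hc ▸ hxm

section Quotient

variable {Ψ : L → L → Prop}

theorem mk_eq_mk_iff (hΨ : IsLatCong Ψ) {a b : L} : Quot.mk Ψ a = Quot.mk Ψ b ↔ Ψ a b :=
  Quot.eq.trans hΨ.1.eqvGen_iff

theorem qle_mk_mk_iff (hΨ : IsLatCong Ψ) {x y : L} :
    qle Ψ (Quot.mk Ψ x) (Quot.mk Ψ y) ↔ Ψ x (x ⊓ y) := by
  constructor
  · rintro ⟨x', y', hx, hy, hle⟩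
    have hx' : Ψ x' x := (mk_eq_mk_iff hΨ).1 hx
    have hinf : Ψ (x' ⊓ y') (x ⊓ y) := (hΨ.2 _ _ _ _ hx' ((mk_eq_mk_iff hΨ).1 hy)).1
    rw [inf_eq_left.2 hle] at hinf
    exact hΨ.1.trans (hΨ.1.symm hx') hinf
  · exact fun h => ⟨x ⊓ y, y, ((mk_eq_mk_iff hΨ).2 h).symm, rfl, inf_le_right⟩

theorem qle_antisymm (hΨ : IsLatCong Ψ) {q q' : Quot Ψ} (h : qle Ψ q q') (h' : qle Ψ q' q) :
    q = q' := by
  induction q using Quot.ind with | _ x =>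
  induction q' using Quot.ind with | _ y =>
  have hx : Ψ x (x ⊓ y) := (qle_mk_mk_iff hΨ).1 h
  have hy : Ψ y (x ⊓ y) := inf_comm y x ▸ (qle_mk_mk_iff hΨ).1 h'
  exact (mk_eq_mk_iff hΨ).2 (hΨ.1.trans hx (hΨ.1.symm hy))

theorem qlt_mk_of_covBy {j c : L} (hΨ : IsLatCong Ψ) (hc : c ⋖ j) (hn : ¬ Ψ j c) :
    qlt Ψ (Quot.mk Ψ c) (Quot.mk Ψ j) := by
  refine ⟨⟨c, j, rfl, rfl, hc.le⟩, fun h => hn ?_⟩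
  simpa only [inf_eq_right.2 hc.le] using (qle_mk_mk_iff hΨ).1 h

/-- The congruence `Φ/Ψ` induced on `L/Ψ` by a congruence `Φ ⊇ Ψ`. -/
def quotMap (Ψ Φ : L → L → Prop) : Quot Ψ → Quot Ψ → Prop :=
  fun q q' => ∃ x y : L, Quot.mk Ψ x = q ∧ Quot.mk Ψ y = q' ∧ Φ x y

def quotComap (Ψ : L → L → Prop) (R : Quot Ψ → Quot Ψ → Prop) : L → L → Prop :=
  fun a b => R (Quot.mk Ψ a) (Quot.mk Ψ b)

variable {Φ : L → L → Prop}

theorem quotMap_mk_mk_iff (hΨ : IsLatCong Ψ) (hΦ : IsLatCong Φ) (hle : ∀ a b, Ψ a b → Φ a b)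
    {x y : L} : quotMap Ψ Φ (Quot.mk Ψ x) (Quot.mk Ψ y) ↔ Φ x y := by
  refine ⟨fun ⟨x', y', hx, hy, h⟩ => ?_, fun h => ⟨x, y, rfl, rfl, h⟩⟩
  have hx' := hle _ _ ((mk_eq_mk_iff hΨ).1 hx)
  have hy' := hle _ _ ((mk_eq_mk_iff hΨ).1 hy)
  exact hΦ.1.trans (hΦ.1.symm hx') (hΦ.1.trans h hy')

theorem qIsLatCong_quotMap (hΨ : IsLatCong Ψ) (hΦ : IsLatCong Φ)
    (hle : ∀ a b, Ψ a b → Φ a b) : qIsLatCong Ψ (quotMap Ψ Φ) := by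
  have h := @quotMap_mk_mk_iff _ _ _ _ hΨ hΦ hle
  refine ⟨⟨?_, ?_, ?_⟩, fun _ _ _ _ h₁ h₂ => ?_⟩
  · rintro ⟨x⟩
    exact h.2 (hΦ.1.refl x)
  · rintro ⟨x⟩ ⟨y⟩ hxy
    exact h.2 (hΦ.1.symm (h.1 hxy))
  · rintro ⟨x⟩ ⟨y⟩ ⟨z⟩ hxy hyz
    exact h.2 (hΦ.1.trans (h.1 hxy) (h.1 hyz))
  · have hΦ₂ := hΦ.2 _ _ _ _ (h.1 h₁) (h.1 h₂)
    exact ⟨h.2 hΦ₂.1, h.2 hΦ₂.2⟩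

theorem isLatCong_quotComap {R : Quot Ψ → Quot Ψ → Prop} (hR : qIsLatCong Ψ R) :
    IsLatCong (quotComap Ψ R) :=
  ⟨⟨fun _ => hR.1.refl _, hR.1.symm, hR.1.trans⟩, hR.2⟩

theorem quotComap_of_rel {R : Quot Ψ → Quot Ψ → Prop} (hR : qIsLatCong Ψ R) {a b : L}
    (h : Ψ a b) : quotComap Ψ R a b :=
  show R _ _ from Quot.sound h ▸ hR.1.refl _

section LowerCover

variable [IsStronglyCoatomic L] {j c : L}

theorem JoinIrred.qle_mk_of_qlt_mk (hΨ : IsLatCong Ψ) (hj : JoinIrred j) (hc : c ⋖ j)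
    {q : Quot Ψ} (hq : qlt Ψ q (Quot.mk Ψ j)) : qle Ψ q (Quot.mk Ψ c) := by
  induction q using Quot.ind with | _ x =>
  have hx : Ψ x (x ⊓ j) := (qle_mk_mk_iff hΨ).1 hq.1
  have hlt : x ⊓ j < j := by
    refine inf_le_right.lt_of_ne fun heq => hq.2 ⟨j, j, rfl, ?_, le_rfl⟩
    exact ((mk_eq_mk_iff hΨ).2 (heq ▸ hx)).symm
  exact ⟨x ⊓ j, c, ((mk_eq_mk_iff hΨ).2 hx).symm, rfl, hj.le_of_lt hc hlt⟩

theorem JoinIrred.qcov_mk_iff (hΨ : IsLatCong Ψ) (hj : JoinIrred j) (hc : c ⋖ j)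
    (hn : ¬ Contracts Ψ j) {p : Quot Ψ} : qcov Ψ p (Quot.mk Ψ j) ↔ p = Quot.mk Ψ c := by
  have hcj := qlt_mk_of_covBy hΨ hc (mt (hj.contracts_iff hc).2 hn)
  constructor
  · intro hp
    have hpc := hj.qle_mk_of_qlt_mk hΨ hc hp.1
    by_contra hne
    exact hp.2 _ ⟨hpc, fun hcp => hne (qle_antisymm hΨ hpc hcp)⟩ hcj
  · rintro rfl
    exact ⟨hcj, fun z hcz hzj => hcz.2 (hj.qle_mk_of_qlt_mk hΨ hc hzj)⟩

theorem JoinIrred.qJoinIrred_mk (hΨ : IsLatCong Ψ) (hj : JoinIrred j) (hn : ¬ Contracts Ψ j) :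
    qJoinIrred Ψ (Quot.mk Ψ j) := by
  obtain ⟨c, hc⟩ := hj.exists
  exact ⟨Quot.mk Ψ c, (hj.qcov_mk_iff hΨ hc hn).2 rfl, fun _ => (hj.qcov_mk_iff hΨ hc hn).1⟩

theorem qContracts_quotMap (hΨ : IsLatCong Ψ) (hj : JoinIrred j)
    (hn : ¬ Contracts Ψ j) (hΦ : Contracts Φ j) : qContracts Ψ (quotMap Ψ Φ) (Quot.mk Ψ j) := by
  obtain ⟨c, hc⟩ := hj.exists
  intro p hp
  rw [(hj.qcov_mk_iff hΨ hc hn).1 hp]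
  exact ⟨j, c, rfl, rfl, hΦ c hc⟩

theorem contracts_quotComap (hΨ : IsLatCong Ψ) {R : Quot Ψ → Quot Ψ → Prop}
    (hR : qIsLatCong Ψ R) (hj : JoinIrred j)
    (h : ¬ Contracts Ψ j → qContracts Ψ R (Quot.mk Ψ j)) : Contracts (quotComap Ψ R) j := by
  intro c hc
  by_cases hΨj : Contracts Ψ j
  · exact quotComap_of_rel hR (hΨj c hc)
  · exact h hΨj _ ((hj.qcov_mk_iff hΨ hc hΨj).2 rfl)

end LowerCover

end Quotient

end

theorem stmt_17_general {L : Type*} [Lattice L] [Fintype L]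
    (Γ Γt : Set L) (hΓt : ∀ j ∈ Γt, JoinIrred j) :
    (∀ j ∈ Γt, ¬ Contracts (CongGen Γ) j →
      qJoinIrred (CongGen Γ) (Quot.mk (CongGen Γ) j)) ∧
    (∀ q q' : Quot (CongGen Γ),
      qCongGen (CongGen Γ)
          ((fun j : L => Quot.mk (CongGen Γ) j) ''
            {j ∈ Γt | ¬ Contracts (CongGen Γ) j}) q q'
        ↔ ∃ x y : L, Quot.mk (CongGen Γ) x = q ∧ Quot.mk (CongGen Γ) y = q' ∧
            CongJoin2 (CongGen Γ) (CongGen Γt) x y) := by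
  have hΨ := congGen_isLatCong Γ
  refine ⟨fun j hj hn => (hΓt j hj).qJoinIrred_mk hΨ hn, fun q q' => ⟨fun h => ?_, ?_⟩⟩
  · refine h _ (qIsLatCong_quotMap hΨ (congJoin2_isLatCong _ _) fun _ _ => congJoin2_of_left) ?_
    rintro _ ⟨j, ⟨hj, hn⟩, rfl⟩
    exact qContracts_quotMap hΨ (hΓt j hj) hn
      fun c hc => congJoin2_of_right (congGen_contracts hj c hc)
  · rintro ⟨x, y, rfl, rfl, hxy⟩ R hR hcon
    refine hxy _ (isLatCong_quotComap hR) (fun _ _ => quotComap_of_rel hR) ?_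
    intro a b hab
    refine hab _ (isLatCong_quotComap hR) fun j hj => ?_
    exact contracts_quotComap hΨ hR (hΓt j hj) fun hn => hcon _ ⟨j, ⟨hj, hn⟩, rfl⟩

/-- Let `L` be a finite lattice, `Γ` and `Γ̃` sets of join-irreducible elements,
`Ψ = CongGen Γ` and `Ψ̃ = CongGen Γ̃` the congruences they generate, and `I` the set of
join-irreducibles contracted by `Ψ`.  Then `{[j]_Ψ : j ∈ Γ̃ \ I}` is a set of
join-irreducible elements of `L/Ψ`, and it generates the congruence `(Ψ ∨ Ψ̃)/Ψ`
on `L/Ψ`. -/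
theorem stmt_17 {L : Type*} [Lattice L] [Fintype L]
    (Γ Γt : Set L) (hΓ : ∀ j ∈ Γ, JoinIrred j) (hΓt : ∀ j ∈ Γt, JoinIrred j) :
    (∀ j ∈ Γt, ¬ Contracts (CongGen Γ) j →
      qJoinIrred (CongGen Γ) (Quot.mk (CongGen Γ) j)) ∧
    (∀ q q' : Quot (CongGen Γ),
      qCongGen (CongGen Γ)
          ((fun j : L => Quot.mk (CongGen Γ) j) ''
            {j ∈ Γt | ¬ Contracts (CongGen Γ) j}) q q'
        ↔ ∃ x y : L, Quot.mk (CongGen Γ) x = q ∧ Quot.mk (CongGen Γ) y = q' ∧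
            CongJoin2 (CongGen Γ) (CongGen Γt) x y) :=
  stmt_17_general Γ Γt hΓt
end

section
/- For the map η_ν on signed permutations defined by extracting from (−πₙ)⋯(−π₁)π₁⋯πₙ the subsequence of values ≥ −1, changing −1 to 0, and adding 1 to each entry: if π ⋖ τ in weak order on signed permutations, then η_ν(π) = η_ν(τ) if and only if the reflection t associated to the cover is (i −i) for some i > 1 or (i −j)(j −i) for some 2 ≤ i < j ≤ n. -/
/-- The map `η_ν`: from `(−πₙ)⋯(−π₁)π₁⋯πₙ` extract the subsequence of values `≥ −1`,
change `−1` to `0`, and add `1` to each entry. -/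
def etaNu (n : ℕ) (f : Fin n → ℤ) : List ℤ :=
  ((((List.ofFn f).map fun x => -x).reverse ++ List.ofFn f).filter
    fun x => decide (-1 ≤ x)).map fun x => if x = -1 then 1 else x + 1

namespace Stmt18Aux

def F (l : List ℤ) : List ℤ :=
  (l.filter fun x => decide (-1 ≤ x)).map fun x => if x = -1 then 1 else x + 1

theorem F_append (l₁ l₂ : List ℤ) : F (l₁ ++ l₂) = F l₁ ++ F l₂ := by
  simp [F]

theorem F_cons_lt {x : ℤ} (h : x < -1) (l : List ℤ) : F (x :: l) = F l := by
  simp [F, List.filter_cons, show ¬(-1 ≤ x) by omega]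

theorem F_cons_m1 {x : ℤ} (h : x = -1) (l : List ℤ) : F (x :: l) = 1 :: F l := by
  subst h; simp [F, List.filter_cons]

theorem F_cons_ge1 {x : ℤ} (h : 1 ≤ x) (l : List ℤ) : F (x :: l) = (x + 1) :: F l := by
  simp [F, List.filter_cons, show (-1:ℤ) ≤ x by omega, show x ≠ -1 by omega]

theorem F_nil : F [] = [] := rfl

theorem F_pair_length (x y : ℤ) : (F [x, y]).length = (F [y, x]).length := by
  by_cases h1 : (-1:ℤ) ≤ x <;> by_cases h2 : (-1:ℤ) ≤ y <;>
    simp [F, List.filter_cons, h1, h2]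

theorem cancel3 (X Y M M' : List ℤ) : X ++ (M ++ Y) = X ++ (M' ++ Y) ↔ M = M' := by
  constructor
  · intro h; exact List.append_cancel_right (List.append_cancel_left h)
  · rintro rfl; rfl

theorem cancel5 (X Y Z M M' N N' : List ℤ) (hlen : M.length = M'.length) :
    X ++ (M ++ (Y ++ (N ++ Z))) = X ++ (M' ++ (Y ++ (N' ++ Z))) ↔ M = M' ∧ N = N' := by
  constructor
  · intro h
    have h1 : M ++ (Y ++ (N ++ Z)) = M' ++ (Y ++ (N' ++ Z)) := List.append_cancel_left h
    have hM : M = M' := by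
      have h2 := congrArg (List.take M.length) h1
      rwa [List.take_left, hlen, List.take_left] at h2
    subst hM
    have h3 := List.append_cancel_left (List.append_cancel_left h1)
    exact ⟨rfl, List.append_cancel_right h3⟩
  · rintro ⟨rfl, rfl⟩; rfl

theorem word_decomp1 (x : ℤ) (T : List ℤ) :
    F (((x :: T).map fun y => -y).reverse ++ (x :: T)) =
      F ((T.map fun y => -y).reverse) ++ (F [-x, x] ++ F T) := by
  have h : ((x :: T).map fun y => -y).reverse ++ (x :: T) =
      ((T.map fun y => -y).reverse) ++ ([-x, x] ++ T) := by
    simp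
  rw [h, F_append, F_append]

theorem word_decomp2 (a b : ℤ) (P Q : List ℤ) :
    F (((P ++ ([a, b] ++ Q)).map fun y => -y).reverse ++ (P ++ ([a, b] ++ Q))) =
      F ((Q.map fun y => -y).reverse) ++
        (F [-b, -a] ++
          ((F ((P.map fun y => -y).reverse) ++ F P) ++ (F [a, b] ++ F Q))) := by
  have h : ((P ++ ([a, b] ++ Q)).map fun y => -y).reverse ++ (P ++ ([a, b] ++ Q)) =
      ((Q.map fun y => -y).reverse) ++
        ([-b, -a] ++ (((P.map fun y => -y).reverse ++ P) ++ ([a, b] ++ Q))) := by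
    simp
  rw [h]
  rw [F_append, F_append, F_append, F_append, F_append]

end Stmt18Aux

open Stmt18Aux in
/-- For `η_ν` and a weak order cover `π ⋖ τ` of signed permutations: `η_ν(π) = η_ν(τ)`
iff the associated reflection `t` is `(i −i)` with `i > 1` — i.e. the cover flips the
sign of a first entry `> 1` — or `(i −j)(j −i)` with `2 ≤ i < j ≤ n` — i.e. the cover
transposes two adjacent entries of opposite signs neither of which is `±1`. -/
theorem stmt_18 (n : ℕ) (f g : Fin n → ℤ)
    (hf : IsSignedPerm n f) (hg : IsSignedPerm n g) :
    (∀ h0 : 0 < n, 0 < f ⟨0, h0⟩ → g ⟨0, h0⟩ = -f ⟨0, h0⟩ →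
      (∀ k : Fin n, k ≠ ⟨0, h0⟩ → g k = f k) →
      (etaNu n f = etaNu n g ↔ 1 < f ⟨0, h0⟩)) ∧
    (∀ i j : Fin n, (j : ℕ) = (i : ℕ) + 1 → f i < f j →
      g i = f j → g j = f i → (∀ k : Fin n, k ≠ i → k ≠ j → g k = f k) →
      (etaNu n f = etaNu n g ↔
        (f i * f j < 0 ∧ |f i| ≠ 1 ∧ |f j| ≠ 1))) := by
  constructor
  · -- Part 1: sign flip of the first entry
    intro h0 hpos hneg heq
    obtain ⟨m, rfl⟩ : ∃ m, n = m + 1 := ⟨n - 1, by omega⟩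
    have h00 : (0 : Fin (m + 1)) = ⟨0, h0⟩ := by ext; simp
    have hTf : List.ofFn f = f ⟨0, h0⟩ :: List.ofFn fun i : Fin m => f i.succ := by
      rw [List.ofFn_succ, h00]
    have hTg : List.ofFn g = -f ⟨0, h0⟩ :: List.ofFn fun i : Fin m => f i.succ := by
      rw [List.ofFn_succ, h00, hneg]
      congr 1
      exact congrArg List.ofFn (funext fun i => heq i.succ (by rw [← h00]; exact Fin.succ_ne_zero i))
    rw [show etaNu (m+1) f = F (((List.ofFn f).map fun y => -y).reverse ++ List.ofFn f) from rfl,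
        show etaNu (m+1) g = F (((List.ofFn g).map fun y => -y).reverse ++ List.ofFn g) from rfl,
        hTf, hTg, word_decomp1, word_decomp1, neg_neg, cancel3]
    obtain h1 | h1 : f ⟨0, h0⟩ = 1 ∨ 2 ≤ f ⟨0, h0⟩ := by omega
    · rw [h1]; decide
    · simp (disch := omega) only [F_cons_lt, F_cons_m1, F_cons_ge1, F_nil]
      exact ⟨fun _ => by omega, fun _ => trivial⟩
  · -- Part 2: adjacent transposition
    intro i j hij hlt hgi hgj hrest
    have hjlt := j.isLt
    have hn2 : (i : ℕ) + 2 ≤ n := by omega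
    have hiI : (i : ℕ) < (List.ofFn f).length := by rw [List.length_ofFn]; omega
    have hiI1 : (i : ℕ) + 1 < (List.ofFn f).length := by rw [List.length_ofFn]; omega
    have hgI : (i : ℕ) < (List.ofFn g).length := by rw [List.length_ofFn]; omega
    have hgI1 : (i : ℕ) + 1 < (List.ofFn g).length := by rw [List.length_ofFn]; omega
    obtain ⟨P, Q, hPf, hPg⟩ :
        ∃ P Q, List.ofFn f = P ++ ([f i, f j] ++ Q) ∧
          List.ofFn g = P ++ ([f j, f i] ++ Q) := by
      refine ⟨(List.ofFn f).take i, (List.ofFn f).drop ((i : ℕ) + 2), ?_, ?_⟩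
      · conv_lhs => rw [← List.take_append_drop (i : ℕ) (List.ofFn f)]
        congr 1
        rw [List.drop_eq_getElem_cons hiI, List.drop_eq_getElem_cons hiI1]
        rw [List.getElem_ofFn, List.getElem_ofFn]
        have e1 : (⟨(i : ℕ), by omega⟩ : Fin n) = i := Fin.eta i i.isLt
        have e2 : (⟨(i : ℕ) + 1, by omega⟩ : Fin n) = j := Fin.ext (show (i : ℕ) + 1 = (j : ℕ) by omega)
        simp only [e1, e2]
        rfl
      · conv_lhs => rw [← List.take_append_drop (i : ℕ) (List.ofFn g)]
        congr 1
        · apply List.ext_getElem (by simp)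
          intro m h1 h2
          have hm : m < (i : ℕ) := by simp at h1; omega
          rw [List.getElem_take, List.getElem_take, List.getElem_ofFn, List.getElem_ofFn]
          exact hrest _ (Fin.ne_of_val_ne (show m ≠ (i : ℕ) by omega))
            (Fin.ne_of_val_ne (show m ≠ (j : ℕ) by omega))
        · have hdrop : (List.ofFn g).drop ((i : ℕ) + 2) = (List.ofFn f).drop ((i : ℕ) + 2) := by
            apply List.ext_getElem (by simp)
            intro m h1 h2
            rw [List.getElem_drop, List.getElem_drop, List.getElem_ofFn, List.getElem_ofFn]
            exact hrest _ (Fin.ne_of_val_ne (show (i : ℕ) + 2 + m ≠ (i : ℕ) by omega))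
              (Fin.ne_of_val_ne (show (i : ℕ) + 2 + m ≠ (j : ℕ) by omega))
          have hdrop' : List.drop ((i : ℕ) + 1 + 1) (List.ofFn g) =
              (List.ofFn f).drop ((i : ℕ) + 2) := hdrop
          rw [List.drop_eq_getElem_cons hgI, List.drop_eq_getElem_cons hgI1]
          rw [List.getElem_ofFn, List.getElem_ofFn]
          have e1 : (⟨(i : ℕ), by omega⟩ : Fin n) = i := Fin.eta i i.isLt
          have e2 : (⟨(i : ℕ) + 1, by omega⟩ : Fin n) = j := Fin.ext (show (i : ℕ) + 1 = (j : ℕ) by omega)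
          simp only [e1, e2, hgi, hgj, hdrop']
          rfl
    rw [show etaNu n f = F (((List.ofFn f).map fun y => -y).reverse ++ List.ofFn f) from rfl,
        show etaNu n g = F (((List.ofFn g).map fun y => -y).reverse ++ List.ofFn g) from rfl,
        hPf, hPg, word_decomp2, word_decomp2,
        cancel5 _ _ _ _ _ _ _ (F_pair_length _ _)]
    have ha0 : 1 ≤ (f i).natAbs := (hf.1 i).1
    have hb0 : 1 ≤ (f j).natAbs := (hf.1 j).1
    have hab : (f i).natAbs ≠ (f j).natAbs := by
      intro h
      have hh : i = j := hf.2 h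
      rw [hh] at hij; omega
    obtain ha | ha | ha | ha : f i ≤ -2 ∨ f i = -1 ∨ f i = 1 ∨ 2 ≤ f i := by omega
    all_goals obtain hb | hb | hb | hb : f j ≤ -2 ∨ f j = -1 ∨ f j = 1 ∨ 2 ≤ f j := by omega
    all_goals try (exfalso; omega)
    all_goals simp (disch := omega) only [F_cons_lt, F_cons_m1, F_cons_ge1, F_nil]
    · -- a ≤ -2, b ≤ -2
      constructor
      · rintro ⟨h1, -⟩; exfalso; simp only [List.cons.injEq] at h1; omega
      · rintro ⟨h1, -, -⟩; exfalso
        have := mul_pos_of_neg_of_neg (show f i < 0 by omega) (show f j < 0 by omega)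
        linarith
    · -- a ≤ -2, b = -1
      constructor
      · rintro ⟨h1, -⟩; exfalso; simp only [List.cons.injEq] at h1; omega
      · rintro ⟨-, -, h3⟩; exfalso; exact h3 (by rw [hb]; norm_num)
    · -- a ≤ -2, b = 1
      constructor
      · rintro ⟨h1, -⟩; exfalso; simp only [List.cons.injEq] at h1; omega
      · rintro ⟨-, -, h3⟩; exfalso; exact h3 (by rw [hb]; norm_num)
    · -- a ≤ -2, 2 ≤ b : the equal case
      constructor
      · rintro -
        exact ⟨mul_neg_of_neg_of_pos (by omega) (by omega),
          by rw [abs_of_neg (by omega)]; omega, by rw [abs_of_pos (by omega)]; omega⟩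
      · rintro -; exact ⟨trivial, trivial⟩
    · -- a = -1, 2 ≤ b
      constructor
      · rintro ⟨-, h2⟩; exfalso; simp only [List.cons.injEq] at h2; omega
      · rintro ⟨-, h2, -⟩; exfalso; exact h2 (by rw [ha]; norm_num)
    · -- a = 1, 2 ≤ b
      constructor
      · rintro ⟨-, h2⟩; exfalso; simp only [List.cons.injEq] at h2; omega
      · rintro ⟨-, h2, -⟩; exfalso; exact h2 (by rw [ha]; norm_num)
    · -- 2 ≤ a, 2 ≤ b
      constructor
      · rintro ⟨-, h2⟩; exfalso; simp only [List.cons.injEq] at h2; omega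
      · rintro ⟨h1, -, -⟩; exfalso
        have := mul_pos (show (0:ℤ) < f i by omega) (show (0:ℤ) < f j by omega)
        linarith
end
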